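/- arXiv:1805.08708 — 6 statements merged into one kernel-verified Lean document; each statement's English description precedes it below -/
import Mathlib

section
/- If $\{N_n\}_n$ is a sequence of normal matrices with singular value symbol $k$, then for every natural number $s$, the sequence $\{N_n^s\}_n$ has singular value symbol $k^s$. -/
open MeasureTheory Filter Matrix

noncomputable def singVals {n : ℕ} (A : Matrix (Fin n) (Fin n) ℂ) : Fin n → ℝ :=
  fun i => Real.sqrt ((Matrix.isHermitian_conjTranspose_mul_self A).eigenvalues i)

/-- `A ∼_σ k` on the domain `Dset`: singular value distribution. -/
def SingSymb {α : Type*} [MeasureSpace α] (Dset : Set α)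
    (A : ∀ n : ℕ, Matrix (Fin n) (Fin n) ℂ) (k : α → ℂ) : Prop :=
  ∀ F : C(ℝ, ℂ), HasCompactSupport F →
    Tendsto (fun n : ℕ => (n : ℂ)⁻¹ * ∑ i, F (singVals (A n) i)) atTop
      (nhds (((volume Dset).toReal)⁻¹ • ∫ x in Dset, F ‖k x‖))

/-- `A ∼_λ k` on the domain `Dset`: eigenvalue (Weyl) distribution, where the
eigenvalues of `A n` (with multiplicity) are the roots of its characteristic polynomial. -/
def SpecSymb {α : Type*} [MeasureSpace α] (Dset : Set α)
    (A : ∀ n : ℕ, Matrix (Fin n) (Fin n) ℂ) (k : α → ℂ) : Prop :=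
  ∀ F : C(ℂ, ℂ), HasCompactSupport F →
    Tendsto (fun n : ℕ =>
        (n : ℂ)⁻¹ * (Multiset.map (fun z => F z) (A n).charpoly.roots).sum) atTop
      (nhds (((volume Dset).toReal)⁻¹ • ∫ x in Dset, F (k x)))

/-- Zero-distributed sequence: `A ∼_σ 0`. -/
def ZeroDist (A : ∀ n : ℕ, Matrix (Fin n) (Fin n) ℂ) : Prop :=
  ∀ F : C(ℝ, ℂ), HasCompactSupport F →
    Tendsto (fun n : ℕ => (n : ℂ)⁻¹ * ∑ i, F (singVals (A n) i)) atTop (nhds (F 0))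

/-
For a normal matrix `A`, `(A ^ s)ᴴ * A ^ s = (Aᴴ * A) ^ s`, so the singular values of `A ^ s`
are, with multiplicity, the `s`-th powers of those of `A`. For `s ≠ 0`, testing the symbol of
`{N n}` against `t ↦ F (t ^ s)`, which is again compactly supported, therefore gives the symbol
of `{N n ^ s}`; for `s = 0` every matrix is the identity and both sides equal `F 1`.
-/

open Finset

lemma Real.sqrt_pow {x : ℝ} (hx : 0 ≤ x) (s : ℕ) : √(x ^ s) = √x ^ s := by
  rw [← Real.sqrt_sq (pow_nonneg (Real.sqrt_nonneg x) s), ← pow_mul, mul_comm, pow_mul,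
    Real.sq_sqrt hx]

lemma HasCompactSupport.comp_pow {𝕜 β : Type*} [NormedDivisionRing 𝕜] [ProperSpace 𝕜] [Zero β]
    {f : 𝕜 → β} (hf : HasCompactSupport f) {s : ℕ} (hs : s ≠ 0) :
    HasCompactSupport (fun t => f (t ^ s)) := by
  obtain ⟨R, hR⟩ := hf.isBounded.subset_closedBall 0
  refine .intro (isCompact_closedBall 0 (max 1 R)) fun t ht => ?_
  refine image_eq_zero_of_notMem_tsupport fun hmem => ht ?_
  have hpow : ‖t‖ ^ s ≤ R := by simpa [norm_pow] using hR hmem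
  rw [mem_closedBall_zero_iff, le_max_iff, or_iff_not_imp_left, not_le]
  exact fun h1 => (le_self_pow₀ h1.le hs).trans hpow

namespace Matrix

open Polynomial in
lemma IsHermitian.map_eigenvalues_of_eq_pow {n : Type*} [Fintype n] [DecidableEq n]
    {A B : Matrix n n ℂ} (hA : A.IsHermitian) (hB : B.IsHermitian) {s : ℕ} (hBA : B = A ^ s) :
    univ.val.map hB.eigenvalues = univ.val.map (fun i => hA.eigenvalues i ^ s) := by
  have hcharpoly : B.charpoly = ∏ i, (X - C ((hA.eigenvalues i ^ s : ℝ) : ℂ)) := by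
    rw [hBA, ← cfc_pow_id (R := ℝ) A s hA.isSelfAdjoint, hA.charpoly_cfc_eq]
    rfl
  have hroots := hB.roots_charpoly_eq_eigenvalues
  rw [hcharpoly, roots_prod _ _ (prod_ne_zero_iff.mpr fun i _ => X_sub_C_ne_zero _)] at hroots
  simp only [roots_X_sub_C, Multiset.bind_singleton] at hroots
  apply Multiset.map_injective Complex.ofReal_injective
  rw [Multiset.map_map, Multiset.map_map]
  exact hroots.symm

end Matrix

lemma singVals_one {n : ℕ} : singVals (1 : Matrix (Fin n) (Fin n) ℂ) = 1 := by
  funext i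
  have h := (isHermitian_conjTranspose_mul_self (1 : Matrix (Fin n) (Fin n) ℂ)).eigenvalues_eq i
  simp only [conjTranspose_one, mul_one, one_mulVec, dotProduct_comm,
    ← EuclideanSpace.inner_eq_star_dotProduct, inner_self_eq_norm_sq_to_K,
    OrthonormalBasis.norm_eq_one, Complex.coe_algebraMap, Complex.ofReal_one, one_pow,
    RCLike.one_re] at h
  simp [singVals, h]

open scoped ComplexOrder in
lemma map_singVals_pow {n : ℕ} (A : Matrix (Fin n) (Fin n) ℂ) [hA : IsStarNormal A] (s : ℕ) :
    univ.val.map (singVals (A ^ s)) = univ.val.map (fun i => singVals A i ^ s) := by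
  have hpow : (A ^ s)ᴴ * A ^ s = (Aᴴ * A) ^ s := by
    rw [conjTranspose_pow, ← star_eq_conjTranspose, hA.star_comm_self.mul_pow]
  have hAA := isHermitian_conjTranspose_mul_self A
  calc univ.val.map (singVals (A ^ s))
      = (univ.val.map (isHermitian_conjTranspose_mul_self (A ^ s)).eigenvalues).map Real.sqrt :=
        (Multiset.map_map _ _ _).symm
    _ = (univ.val.map fun i => hAA.eigenvalues i ^ s).map Real.sqrt := by
        rw [hAA.map_eigenvalues_of_eq_pow _ hpow]
    _ = univ.val.map (fun i => singVals A i ^ s) := by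
        rw [Multiset.map_map]
        exact Multiset.map_congr rfl fun i _ =>
          Real.sqrt_pow ((posSemidef_conjTranspose_mul_self A).eigenvalues_nonneg i) s

section SingSymb

variable {α : Type*} [MeasureSpace α] {D : Set α}

theorem singSymb_one (hD0 : 0 < volume D) (hD1 : volume D < ⊤) :
    SingSymb D (fun _ => 1) (fun _ => (1 : ℂ)) := by
  intro F _
  have hvol : (volume D).toReal ≠ 0 := (ENNReal.toReal_pos hD0.ne' hD1.ne).ne'
  have hlimit : (volume D).toReal⁻¹ • ∫ _ in D, F ‖(1 : ℂ)‖ = F 1 := by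
    rw [norm_one, setIntegral_const, smul_smul, measureReal_def, inv_mul_cancel₀ hvol, one_smul]
  rw [hlimit]
  refine tendsto_const_nhds.congr' ?_
  filter_upwards [eventually_ne_atTop 0] with n hn
  simp [singVals_one, hn]

theorem SingSymb.pow {N : ∀ n : ℕ, Matrix (Fin n) (Fin n) ℂ} {k : α → ℂ} (hk : SingSymb D N k)
    (hN : ∀ n, IsStarNormal (N n)) {s : ℕ} (hs : s ≠ 0) :
    SingSymb D (fun n => N n ^ s) (fun x => k x ^ s) := by
  intro F hF
  let G : C(ℝ, ℂ) := F.comp ⟨(· ^ s), continuous_pow s⟩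
  have hsum (n : ℕ) : ∑ i, G (singVals (N n) i) = ∑ i, F (singVals (N n ^ s) i) := by
    have h := congrArg (fun m => (m.map F).sum) (map_singVals_pow (N n) s (hA := hN n))
    simp only [Multiset.map_map, Function.comp_def, sum_map_val] at h
    exact h.symm
  have hintegrand (x : α) : G ‖k x‖ = F ‖k x ^ s‖ := by
    rw [norm_pow]
    rfl
  simpa only [hsum, hintegrand] using hk G (hF.comp_pow hs)

end SingSymb

/-- If a normal sequence has singular value symbol `k`, its `s`-th powers have
singular value symbol `k^s`. -/
theorem normal_pow_singular_symbol {q : ℕ}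
    (Dset : Set (EuclideanSpace ℝ (Fin q))) (hD0 : 0 < volume Dset) (hD1 : volume Dset < ⊤)
    (N : ∀ n : ℕ, Matrix (Fin n) (Fin n) ℂ) (hN : ∀ n, IsStarNormal (N n))
    (k : EuclideanSpace ℝ (Fin q) → ℂ) (hk : SingSymb Dset N k) (s : ℕ) :
    SingSymb Dset (fun n => (N n) ^ s) (fun x => (k x) ^ s) := by
  obtain rfl | hs := eq_or_ne s 0
  · simpa only [pow_zero] using singSymb_one hD0 hD1
  · exact hk.pow hN hs
end

section
/- Let $a\in C^\infty([0,1])$ (or just $C^1$), $f$ a trigonometric polynomial of degree $k$, $m = \lfloor\sqrt n\rfloor$, and let $LT_n(a,f) = [D_m(a) \otimes T_{\lfloor n/m\rfloor}(f)] \oplus 0_{n \bmod m}$. Then $LT_n(a,f) - D_n(a)T_n(f) = R_n + N_n$ where $\mathrm{rk}(R_n) = o(n)$ and $\|N_n\| = o(1)$; consequently $\{LT_n(a,f)\}_n$ and $\{D_n(a)T_n(f)\}_n$ are acs equivalent (their difference is zero-distributed). -/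
open MeasureTheory Filter Matrix

/-- The Toeplitz matrix `T_n(f) = [f_{i-j}]` of a trigonometric polynomial with
Fourier coefficients `c`. -/
def toeplitzM (c : ℤ → ℂ) (n : ℕ) : Matrix (Fin n) (Fin n) ℂ :=
  fun i j => c ((i : ℤ) - (j : ℤ))

/-- The diagonal sampling matrix `D_n(a) = diag(a(i/n))`. -/
noncomputable def diagSampling (a : ℝ → ℂ) (n : ℕ) : Matrix (Fin n) (Fin n) ℂ :=
  Matrix.diagonal (fun i : Fin n => a (((i : ℕ) + 1 : ℝ) / (n : ℝ)))

/-- The locally Toeplitz operator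
`LT_n(a,f) = [D_m(a) ⊗ T_{⌊n/m⌋}(f)] ⊕ 0_{n mod m}` with `m = ⌊√n⌋`:
a block diagonal matrix with `m` Toeplitz blocks of size `q = ⌊n/m⌋`, the `s`-th
block scaled by `a(s/m)`, followed by an `(n mod m) × (n mod m)` zero block. -/
noncomputable def LTop (a : ℝ → ℂ) (c : ℤ → ℂ) (n : ℕ) : Matrix (Fin n) (Fin n) ℂ :=
  fun i j =>
    let m := Nat.sqrt n
    let q := n / m
    if (i : ℕ) < m * q ∧ (j : ℕ) < m * q ∧ (i : ℕ) / q = (j : ℕ) / q then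
      a (((i : ℕ) / q + 1 : ℝ) / (m : ℝ)) * c (((i : ℕ) % q : ℤ) - ((j : ℕ) % q : ℤ))
    else 0

/-!
Let `m = ⌊√n⌋` and `q = ⌊n/m⌋`. In a row `i` of one of the first `m - 1` diagonal blocks of
`LT_n(a,f)`, at distance more than `k` from the block boundaries, `LT_n(a,f) - D_n(a) T_n(f)`
coincides with `(a(x_i) - a((i+1)/n)) T_n(f)`, where `x_i = (i/q + 1)/m` is the point at which
`LT_n` samples `a`, and `|x_i - (i+1)/n| ≤ 2/m`. Since `a` is Lipschitz on `[0,1]` and `T_n(f)`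
has bandwidth `k`, these rows form a matrix of norm `O(1/√n)` by Schur's test, while the remaining
`O(√n)` rows form a matrix of rank `O(√n)`. Finally, a rank-`o(n)` plus norm-`o(1)` sequence has
only `o(n)` singular values above any `δ > 0` (a Weyl-type count), so it is zero-distributed.
-/

open Finset

lemma ofReal_sum_norm_sq {ι : Type*} [Fintype ι] (v : ι → ℂ) :
    ((∑ i, ‖v i‖ ^ 2 : ℝ) : ℂ) = star v ⬝ᵥ v := by
  push_cast
  simp [dotProduct, Complex.conj_mul']

lemma star_mulVec_dotProduct_mulVec {ι κ : Type*} [Fintype ι] [Fintype κ]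
    (M : Matrix ι κ ℂ) (v : κ → ℂ) :
    star (M *ᵥ v) ⬝ᵥ (M *ᵥ v) = star v ⬝ᵥ ((Mᴴ * M) *ᵥ v) := by
  rw [star_mulVec, ← dotProduct_mulVec, mulVec_mulVec]

section Unitary

variable {ι : Type*} [Fintype ι] [DecidableEq ι] {U : Matrix ι ι ℂ}

lemma sum_norm_sq_mulVec_unitary (hU : U ∈ unitaryGroup ι ℂ) (v : ι → ℂ) :
    ∑ i, ‖(U *ᵥ v) i‖ ^ 2 = ∑ i, ‖v i‖ ^ 2 := by
  apply Complex.ofReal_injective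
  rw [ofReal_sum_norm_sq, ofReal_sum_norm_sq, star_mulVec_dotProduct_mulVec,
    ← star_eq_conjTranspose, (mem_unitaryGroup_iff').1 hU, one_mulVec]

lemma mulVec_unitary_ne_zero (hU : U ∈ unitaryGroup ι ℂ) {v : ι → ℂ} (hv : v ≠ 0) :
    U *ᵥ v ≠ 0 := fun h => hv <| by
  rw [← one_mulVec v, ← (mem_unitaryGroup_iff').1 hU, ← mulVec_mulVec, h, mulVec_zero]

end Unitary

section SingularValues

variable {n : ℕ}

lemma singVals_nonneg (A : Matrix (Fin n) (Fin n) ℂ) (i : Fin n) : 0 ≤ singVals A i :=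
  Real.sqrt_nonneg _

noncomputable abbrev rightSingVecs (A : Matrix (Fin n) (Fin n) ℂ) : Matrix (Fin n) (Fin n) ℂ :=
  (isHermitian_conjTranspose_mul_self A).eigenvectorUnitary

lemma rightSingVecs_mem_unitaryGroup (A : Matrix (Fin n) (Fin n) ℂ) :
    rightSingVecs A ∈ unitaryGroup (Fin n) ℂ :=
  (isHermitian_conjTranspose_mul_self A).eigenvectorUnitary.2

lemma sum_norm_sq_mulVec_rightSingVecs (A : Matrix (Fin n) (Fin n) ℂ) (w : Fin n → ℂ) :
    ∑ i, ‖(A *ᵥ (rightSingVecs A *ᵥ w)) i‖ ^ 2 = ∑ t, singVals A t ^ 2 * ‖w t‖ ^ 2 := by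
  have hH := isHermitian_conjTranspose_mul_self A
  set U := rightSingVecs A
  have hdiag : (A * U)ᴴ * (A * U) = diagonal (RCLike.ofReal ∘ hH.eigenvalues) := by
    rw [conjTranspose_mul, ← star_eq_conjTranspose U, Matrix.mul_assoc, ← Matrix.mul_assoc Aᴴ]
    simpa [Matrix.mul_assoc] using hH.conjStarAlgAut_star_eigenvectorUnitary
  have hsq : ∀ t, singVals A t ^ 2 = hH.eigenvalues t := fun t =>
    Real.sq_sqrt (eigenvalues_conjTranspose_mul_self_nonneg A t)
  apply Complex.ofReal_injective
  rw [ofReal_sum_norm_sq, mulVec_mulVec, star_mulVec_dotProduct_mulVec, hdiag]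
  simp [dotProduct, mulVec_diagonal, hsq, Complex.conj_mul', mul_left_comm]

lemma sum_norm_sq_mulVec_lt {N : Matrix (Fin n) (Fin n) ℂ} {δ : ℝ} (hN : ∀ t, singVals N t < δ)
    {v : Fin n → ℂ} (hv : v ≠ 0) :
    ∑ i, ‖(N *ᵥ v) i‖ ^ 2 < δ ^ 2 * ∑ i, ‖v i‖ ^ 2 := by
  have hU := rightSingVecs_mem_unitaryGroup N
  set w := star (rightSingVecs N) *ᵥ v
  obtain ⟨t, ht⟩ := Function.ne_iff.1 (mulVec_unitary_ne_zero (Unitary.star_mem hU) hv)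
  have hσ : ∀ t, singVals N t ^ 2 < δ ^ 2 := fun t =>
    pow_lt_pow_left₀ (hN t) (singVals_nonneg N t) two_ne_zero
  have hvw : v = rightSingVecs N *ᵥ w := by
    rw [mulVec_mulVec, Unitary.mul_star_self_of_mem hU, one_mulVec]
  rw [hvw, sum_norm_sq_mulVec_rightSingVecs, sum_norm_sq_mulVec_unitary hU, mul_sum]
  exact sum_lt_sum (fun t _ => mul_le_mul_of_nonneg_right (hσ t).le (sq_nonneg _))
    ⟨t, mem_univ t, mul_lt_mul_of_pos_right (hσ t) (by positivity)⟩

/-- A nonzero `v ∈ ker R` orthogonal to the right singular vectors of `R + N` with singular value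
`< δ` would satisfy `δ ‖v‖ ≤ ‖(R + N) v‖ = ‖N v‖ < δ ‖v‖`; such a `v` exists as soon as more
than `rank R` singular values of `R + N` are `≥ δ`. -/
lemma card_singVals_ge_le_rank (R N : Matrix (Fin n) (Fin n) ℂ) {δ : ℝ}
    (hN : ∀ t, singVals N t < δ) :
    #{t | δ ≤ singVals (R + N) t} ≤ R.rank := by
  set T := ({t | δ ≤ singVals (R + N) t} : Finset (Fin n))
  set U := rightSingVecs (R + N)
  have hU : U ∈ unitaryGroup (Fin n) ℂ := rightSingVecs_mem_unitaryGroup (R + N)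
  by_contra! hT
  obtain ⟨t₀, -⟩ := card_pos.1 (R.rank.zero_le.trans_lt hT)
  have hδ : 0 ≤ δ := (singVals_nonneg N t₀).trans (hN t₀).le
  set K := LinearMap.ker (R * U).mulVecLin
  let restrict : K →ₗ[ℂ] ({t // t ∉ T} → ℂ) := LinearMap.funLeft ℂ ℂ Subtype.val ∘ₗ K.subtype
  have hdim : Module.finrank ℂ ({t // t ∉ T} → ℂ) < Module.finrank ℂ K := by
    have hK := (R * U).mulVecLin.finrank_range_add_finrank_ker
    have hRU : (R * U).rank ≤ R.rank := rank_mul_le_left R U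
    have hTn : #T ≤ n := by simpa using T.card_le_univ
    rw [Module.finrank_fintype_fun_eq_card, Fintype.card_fin] at hK
    rw [Module.finrank_fintype_fun_eq_card, Fintype.card_subtype_compl, Fintype.card_fin,
      Fintype.card_coe]
    change (R * U).rank + Module.finrank ℂ K = n at hK
    omega
  obtain ⟨⟨w, hwK⟩, hwker, hw⟩ :=
    (Submodule.ne_bot_iff _).1 (LinearMap.ker_ne_bot_of_finrank_lt (f := restrict) hdim)
  have hw0 : w ≠ 0 := fun h => hw (by simp [h])
  have hwT : ∀ t ∉ T, w t = 0 := fun t ht => congrFun hwker ⟨t, ht⟩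
  have hRw : R *ᵥ (U *ᵥ w) = 0 := by rw [mulVec_mulVec]; exact hwK
  have hlow : δ ^ 2 * ∑ t, ‖w t‖ ^ 2 ≤ ∑ i, ‖(N *ᵥ (U *ᵥ w)) i‖ ^ 2 := by
    rw [← zero_add (N *ᵥ _), ← hRw, ← add_mulVec, sum_norm_sq_mulVec_rightSingVecs, mul_sum]
    refine sum_le_sum fun t _ => ?_
    by_cases ht : t ∈ T
    · exact mul_le_mul_of_nonneg_right (pow_le_pow_left₀ hδ (mem_filter.1 ht).2 2) (sq_nonneg _)
    · simp [hwT t ht]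
  have hup := sum_norm_sq_mulVec_lt hN (mulVec_unitary_ne_zero hU hw0)
  rw [sum_norm_sq_mulVec_unitary hU] at hup
  exact hlow.not_gt hup

end SingularValues

lemma norm_average_sub_le {n : ℕ} (hn : 0 < n) (F : ℝ → ℂ) (σ : Fin n → ℝ) {K η δ : ℝ}
    (hK : ∀ x, ‖F x‖ ≤ K) (hη0 : 0 ≤ η) (hη : ∀ i, σ i < δ → ‖F (σ i) - F 0‖ ≤ η) :
    ‖(n : ℂ)⁻¹ * ∑ i, F (σ i) - F 0‖ ≤ η + 2 * K * (#{i | δ ≤ σ i} / n) := by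
  have hterm : ∀ i, ‖F (σ i) - F 0‖ ≤ η + if δ ≤ σ i then 2 * K else 0 := by
    intro i
    split_ifs with h
    · linarith [norm_sub_le (F (σ i)) (F 0), hK (σ i), hK 0]
    · simpa using hη i (not_le.1 h)
  have hn' : (n : ℂ) ≠ 0 := by exact_mod_cast hn.ne'
  calc ‖(n : ℂ)⁻¹ * ∑ i, F (σ i) - F 0‖ = (n : ℝ)⁻¹ * ‖∑ i, (F (σ i) - F 0)‖ := by
        rw [← Complex.norm_natCast, ← norm_inv, ← norm_mul, sum_sub_distrib, sum_const,
          card_univ, Fintype.card_fin, nsmul_eq_mul, mul_sub, inv_mul_cancel_left₀ hn']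
    _ ≤ (n : ℝ)⁻¹ * ∑ i, (η + if δ ≤ σ i then 2 * K else 0) := by
        gcongr; exact (norm_sum_le _ _).trans (sum_le_sum fun i _ => hterm i)
    _ = η + 2 * K * (#{i | δ ≤ σ i} / n) := by
        rw [sum_add_distrib, sum_ite, sum_const_zero, sum_const, sum_const, card_univ,
          Fintype.card_fin, nsmul_eq_mul, nsmul_eq_mul, add_zero]
        field_simp

lemma zeroDist_of_card_singVals_ge (A : ∀ n : ℕ, Matrix (Fin n) (Fin n) ℂ)
    (hA : ∀ δ > 0, Tendsto (fun n => (#{i | δ ≤ singVals (A n) i} : ℝ) / n) atTop (nhds 0)) :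
    ZeroDist A := by
  intro F hF
  obtain ⟨K, hK⟩ := F.continuous.bounded_above_of_compact_support hF
  rw [Metric.tendsto_nhds]
  intro ε hε
  obtain ⟨δ, hδ, hF0⟩ :=
    Metric.continuousAt_iff.1 (F.continuous.continuousAt (x := 0)) (ε / 2) (half_pos hε)
  have hsmall := ((hA δ hδ).const_mul (2 * K)).eventually (gt_mem_nhds (a := ε / 2) (by simpa))
  filter_upwards [hsmall, eventually_gt_atTop 0] with n hn hn0
  rw [dist_eq_norm]
  refine (norm_average_sub_le (δ := δ) hn0 F _ hK (half_pos hε).le fun i hi => ?_).trans_lt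
    (by linarith)
  rw [← dist_eq_norm]
  refine (hF0 ?_).le
  rwa [Real.dist_eq, sub_zero, abs_of_nonneg (singVals_nonneg _ _)]

theorem zeroDist_add_of_rank_of_singVals (R N : ∀ n : ℕ, Matrix (Fin n) (Fin n) ℂ)
    (hR : Tendsto (fun n => ((R n).rank : ℝ) / n) atTop (nhds 0))
    (hN : Tendsto (fun n => ⨆ i, singVals (N n) i) atTop (nhds 0)) :
    ZeroDist fun n => R n + N n := by
  refine zeroDist_of_card_singVals_ge _ fun δ hδ =>
    squeeze_zero' (.of_forall fun n => by positivity) ?_ hR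
  filter_upwards [hN.eventually (gt_mem_nhds hδ)] with n hn
  gcongr
  exact card_singVals_ge_le_rank _ _ fun i =>
    (le_ciSup (Set.finite_range _).bddAbove i).trans_lt hn

section LinftyOpNorm

attribute [local instance] Matrix.linftyOpNormedAddCommGroup Matrix.linftyOpNormedRing
  Matrix.linftyOpNormedAlgebra

lemma linfty_opNorm_le_of_forall_sum_le {ι κ : Type*} [Fintype ι] [Fintype κ]
    {A : Matrix ι κ ℂ} {r : ℝ} (hr : 0 ≤ r) (hA : ∀ i, ∑ j, ‖A i j‖ ≤ r) : ‖A‖ ≤ r := by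
  rw [linfty_opNorm_def, ← NNReal.coe_mk r hr, NNReal.coe_le_coe]
  exact Finset.sup_le fun i _ => by rw [← NNReal.coe_le_coe]; push_cast; exact hA i

lemma sq_singVals_le_of_sum_le {n : ℕ} {A : Matrix (Fin n) (Fin n) ℂ} {r c : ℝ}
    (hr : 0 ≤ r) (hc : 0 ≤ c) (hrow : ∀ i, ∑ j, ‖A i j‖ ≤ r) (hcol : ∀ j, ∑ i, ‖A i j‖ ≤ c)
    (t : Fin n) : singVals A t ^ 2 ≤ c * r := by
  have : Nonempty (Fin n) := ⟨t⟩
  have hH := isHermitian_conjTranspose_mul_self A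
  have hmem : ((hH.eigenvalues t : ℝ) : ℂ) ∈ spectrum ℂ (Aᴴ * A) := by
    rw [hH.spectrum_eq_image_range]; exact ⟨_, ⟨t, rfl⟩, rfl⟩
  calc singVals A t ^ 2 = hH.eigenvalues t :=
        Real.sq_sqrt (eigenvalues_conjTranspose_mul_self_nonneg A t)
    _ ≤ ‖((hH.eigenvalues t : ℝ) : ℂ)‖ := by rw [Complex.norm_real]; exact Real.le_norm_self _
    _ ≤ ‖Aᴴ * A‖ := spectrum.norm_le_norm_of_mem hmem
    _ ≤ ‖Aᴴ‖ * ‖A‖ := norm_mul_le _ _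
    _ ≤ c * r := mul_le_mul (linfty_opNorm_le_of_forall_sum_le hc fun j => by simpa using hcol j)
        (linfty_opNorm_le_of_forall_sum_le hr hrow) (norm_nonneg _) hc

end LinftyOpNorm

lemma sum_le_of_band {n k : ℕ} {g : Fin n → ℝ} (s : ℤ) {ε : ℝ} (hε : 0 ≤ ε)
    (hg : ∀ j, g j ≤ ε) (hband : ∀ j : Fin n, (k : ℤ) < |s - j| → g j = 0) :
    ∑ j, g j ≤ (2 * k + 1) * ε := by
  set J := ({j | |s - j| ≤ k} : Finset (Fin n))
  have hJ : #J ≤ 2 * k + 1 := by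
    calc #J ≤ #(Icc (s - k) (s + k)) := card_le_card_of_injOn (fun j => (j : ℤ))
          (fun j hj => by
            have := abs_le.1 (mem_filter.1 hj).2
            simp only [coe_Icc, Set.mem_Icc]; constructor <;> linarith)
          (fun _ _ _ _ h => Fin.ext (Int.natCast_inj.1 h))
      _ = 2 * k + 1 := by rw [Int.card_Icc]; omega
  calc ∑ j, g j = ∑ j ∈ J, g j :=
        (sum_subset (subset_univ J) fun j _ hj => hband j (by simpa [J] using hj)).symm
    _ ≤ #J • ε := sum_le_card_nsmul _ _ _ fun j _ => hg j
    _ ≤ (2 * k + 1) * ε := by rw [nsmul_eq_mul]; gcongr; exact_mod_cast hJ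

lemma singVals_le_of_band {n k : ℕ} {A : Matrix (Fin n) (Fin n) ℂ} {ε : ℝ}
    (hband : ∀ i j : Fin n, (k : ℤ) < |(i : ℤ) - j| → A i j = 0) (hA : ∀ i j, ‖A i j‖ ≤ ε)
    (t : Fin n) : singVals A t ≤ (2 * k + 1) * ε := by
  have hε : 0 ≤ ε := (norm_nonneg _).trans (hA t t)
  have hB : 0 ≤ (2 * k + 1) * ε := by positivity
  refine (pow_le_pow_iff_left₀ (singVals_nonneg A t) hB two_ne_zero).1 ?_
  rw [sq ((2 * k + 1) * ε)]
  refine sq_singVals_le_of_sum_le hB hB (fun i => ?_) (fun j => ?_) t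
  · exact sum_le_of_band i hε (fun j => hA i j) fun j hj => by simp [hband i j hj]
  · refine sum_le_of_band j hε (fun i => hA i j) fun i hi => ?_
    simp [hband i j (by rwa [abs_sub_comm])]

def rowRestrict {ι κ α : Type*} [DecidableEq ι] [Zero α] (S : Finset ι) (A : Matrix ι κ α) :
    Matrix ι κ α :=
  of fun i j => if i ∈ S then A i j else 0

lemma rowRestrict_compl_add_rowRestrict {ι κ α : Type*} [Fintype ι] [DecidableEq ι]
    [AddZeroClass α] (S : Finset ι) (A : Matrix ι κ α) :
    rowRestrict Sᶜ A + rowRestrict S A = A := by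
  ext i j
  by_cases hi : i ∈ S <;> simp [rowRestrict, hi]

lemma rank_rowRestrict_le {ι κ K : Type*} [Fintype ι] [Fintype κ] [DecidableEq ι] [Field K]
    (S : Finset ι) (A : Matrix ι κ K) : (rowRestrict S A).rank ≤ #S := by
  classical
  have : rowRestrict S A = diagonal (fun i => if i ∈ S then (1 : K) else 0) * A := by
    ext i j
    by_cases hi : i ∈ S <;> simp [rowRestrict, diagonal_mul, hi]
  rw [this]
  refine (rank_mul_le_left _ _).trans_eq ?_
  rw [rank_diagonal, Fintype.card_subtype]
  congr 1
  ext i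
  simp

lemma tendsto_div_sqrt_atTop_nhds_zero (K : ℝ) :
    Tendsto (fun n : ℕ => K / Nat.sqrt n) atTop (nhds 0) :=
  (tendsto_const_div_atTop_nhds_zero_nat K).comp
    (tendsto_atTop_atTop.2 fun b => ⟨b * b, fun _ => Nat.le_sqrt.2⟩)

lemma exists_forall_norm_le_of_eq_zero_of_lt_abs {c : ℤ → ℂ} {k : ℕ}
    (hc : ∀ l : ℤ, (k : ℤ) < |l| → c l = 0) : ∃ C, ∀ l, ‖c l‖ ≤ C := by
  refine ⟨∑ l ∈ Icc (-(k : ℤ)) k, ‖c l‖, fun l => ?_⟩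
  by_cases hl : |l| ≤ k
  · exact single_le_sum (fun _ _ => norm_nonneg _) (mem_Icc.2 (abs_le.1 hl))
  · rw [hc l (not_le.1 hl), norm_zero]; exact sum_nonneg fun _ _ => norm_nonneg _

lemma sqrt_block_bounds {n : ℕ} (hn : 0 < n) :
    0 < Nat.sqrt n ∧ Nat.sqrt n ≤ n / Nat.sqrt n ∧ Nat.sqrt n * (n / Nat.sqrt n) ≤ n ∧
      n < Nat.sqrt n * (n / Nat.sqrt n) + Nat.sqrt n := by
  have hm := Nat.sqrt_pos.2 hn
  refine ⟨hm, (Nat.le_div_iff_mul_le hm).2 (Nat.sqrt_le n), ?_, ?_⟩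
  · rw [mul_comm]; exact Nat.div_mul_le_self n _
  · rw [mul_comm]; exact Nat.lt_div_mul_add hm

/-- The rows `i` of `LTop a c n` whose band `|i - j| ≤ k` lies inside one diagonal block that is
not the last one. The last block is excluded because `LTop` samples `a` at `(i / q + 1) / m` with
real division, which there lies in `[1, 1 + 1/m)`, outside the interval where `a` is controlled. -/
def goodRows (k n : ℕ) : Finset (Fin n) :=
  {i | k ≤ (i : ℕ) % (n / Nat.sqrt n) ∧ (i : ℕ) % (n / Nat.sqrt n) + k < n / Nat.sqrt n ∧
    (i : ℕ) + n / Nat.sqrt n ≤ Nat.sqrt n * (n / Nat.sqrt n)}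

lemma LTop_apply (a : ℝ → ℂ) (c : ℤ → ℂ) (n : ℕ) (i j : Fin n) :
    LTop a c n i j =
      if (i : ℕ) < Nat.sqrt n * (n / Nat.sqrt n) ∧ (j : ℕ) < Nat.sqrt n * (n / Nat.sqrt n) ∧
          (i : ℕ) / (n / Nat.sqrt n) = (j : ℕ) / (n / Nat.sqrt n) then
        a (((i : ℝ) / (n / Nat.sqrt n : ℕ) + 1) / Nat.sqrt n) * c ((i : ℤ) - j)
      else 0 := by
  simp only [LTop]
  split_ifs with h
  · congr 2
    have := Nat.div_add_mod (i : ℕ) (n / Nat.sqrt n)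
    have := Nat.div_add_mod (j : ℕ) (n / Nat.sqrt n)
    rw [h.2.2, ← Int.natCast_mod, ← Int.natCast_mod] at *
    generalize n / Nat.sqrt n * ((j : ℕ) / (n / Nat.sqrt n)) = s at *
    omega
  · rfl

lemma same_block_of_mem_goodRows {k n : ℕ} {i j : Fin n} (hi : i ∈ goodRows k n)
    (hij : |(i : ℤ) - j| ≤ k) :
    (i : ℕ) < Nat.sqrt n * (n / Nat.sqrt n) ∧ (j : ℕ) < Nat.sqrt n * (n / Nat.sqrt n) ∧
      (i : ℕ) / (n / Nat.sqrt n) = (j : ℕ) / (n / Nat.sqrt n) := by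
  obtain ⟨hlo, hhi, hlast⟩ := (mem_filter.1 hi).2
  obtain ⟨h1, h2⟩ := abs_le.1 hij
  generalize n / Nat.sqrt n = q at *
  generalize Nat.sqrt n * q = M at *
  have hdiv := Nat.div_add_mod (i : ℕ) q
  generalize (i : ℕ) / q = b at *
  generalize (i : ℕ) % q = r at *
  have hj : (j : ℕ) / q = b := by
    apply Nat.div_eq_of_lt_le
    · rw [mul_comm]; generalize q * b = s at *; omega
    · rw [add_mul, one_mul, mul_comm]; generalize q * b = s at *; omega
  refine ⟨by omega, ?_, hj.symm⟩
  generalize q * b = s at *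
  omega

lemma LTop_sub_apply_of_mem_goodRows {a : ℝ → ℂ} {c : ℤ → ℂ} {k n : ℕ}
    (hc : ∀ l : ℤ, (k : ℤ) < |l| → c l = 0) {i : Fin n} (hi : i ∈ goodRows k n) (j : Fin n) :
    (LTop a c n - diagSampling a n * toeplitzM c n) i j =
      (a (((i : ℝ) / (n / Nat.sqrt n : ℕ) + 1) / Nat.sqrt n) - a (((i : ℝ) + 1) / n)) *
        c ((i : ℤ) - j) := by
  rw [Matrix.sub_apply, diagSampling, Matrix.diagonal_mul, toeplitzM, LTop_apply]
  by_cases hij : |(i : ℤ) - j| ≤ k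
  · rw [if_pos (same_block_of_mem_goodRows hi hij)]
    ring
  · simp [hc _ (not_le.1 hij)]

lemma card_filter_mod_le (n : ℕ) {q : ℕ} (hq : 0 < q) (P : ℕ → Prop) [DecidablePred P] :
    #{i : Fin n | P ((i : ℕ) % q)} ≤ (n / q + 1) * #{r ∈ range q | P r} := by
  rw [← card_range (n / q + 1), ← card_product]
  refine card_le_card_of_injOn (fun i => ((i : ℕ) / q, (i : ℕ) % q)) (fun i hi => ?_) ?_
  · simp only [coe_filter, mem_univ, true_and, Set.mem_ofPred_eq] at hi
    simp only [coe_product, coe_range, coe_filter, Set.mem_prod, Set.mem_Iio, mem_range,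
      Set.mem_ofPred_eq]
    exact ⟨Nat.lt_succ_of_le (Nat.div_le_div_right i.2.le), Nat.mod_lt _ hq, hi⟩
  · intro i _ j _ h
    simp only [Prod.mk.injEq] at h
    exact Fin.ext (by rw [← Nat.div_add_mod i q, ← Nat.div_add_mod j q, h.1, h.2])

lemma card_filter_mod_near_boundary_le (n k : ℕ) {q : ℕ} (hq : 0 < q) :
    #{i : Fin n | (i : ℕ) % q < k ∨ q ≤ (i : ℕ) % q + k} ≤ (n / q + 1) * (2 * k) := by
  refine (card_filter_mod_le n hq fun r => r < k ∨ q ≤ r + k).trans (Nat.mul_le_mul_left _ ?_)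
  calc #{r ∈ range q | r < k ∨ q ≤ r + k} ≤ #(range k ∪ Ico (q - k) q) := by
        refine card_le_card fun r hr => ?_
        simp only [mem_filter, mem_range, mem_union, mem_Ico] at hr ⊢
        omega
    _ ≤ 2 * k := by
        refine (card_union_le _ _).trans ?_
        simp only [card_range, Nat.card_Ico]
        omega

lemma card_filter_lt_add_le (n M q : ℕ) : #{i : Fin n | M < (i : ℕ) + q} ≤ n + q - M := by
  refine (card_le_card_of_injOn (t := Ico (M + 1 - q) n) (fun i : Fin n => (i : ℕ))
    (fun i hi => ?_) Fin.val_injective.injOn).trans ?_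
  · simp only [coe_filter, mem_univ, true_and, Set.mem_ofPred_eq] at hi
    simp only [coe_Ico, Set.mem_Ico]
    omega
  · rw [Nat.card_Ico]; omega

lemma card_goodRows_compl_mul_le (k n : ℕ) :
    #(goodRows k n)ᶜ * Nat.sqrt n ≤ (4 * k + 2) * n := by
  rcases Nat.eq_zero_or_pos n with rfl | hn
  · simp
  obtain ⟨hm, hmq, hMn, hnM⟩ := sqrt_block_bounds hn
  have hmm : Nat.sqrt n * Nat.sqrt n ≤ n := Nat.sqrt_le n
  have hnq : n / (n / Nat.sqrt n) ≤ n / Nat.sqrt n := Nat.div_le_div_left hmq hm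
  rw [goodRows]
  generalize n / Nat.sqrt n = q at *
  generalize Nat.sqrt n = m at *
  have hsub : ({i | k ≤ (i : ℕ) % q ∧ (i : ℕ) % q + k < q ∧ (i : ℕ) + q ≤ m * q} :
        Finset (Fin n))ᶜ ⊆
      ({i | (i : ℕ) % q < k ∨ q ≤ (i : ℕ) % q + k} : Finset (Fin n)) ∪
        ({i | m * q < (i : ℕ) + q} : Finset (Fin n)) := by
    intro i hi
    simp only [compl_filter, mem_filter, mem_univ, true_and, mem_union] at hi ⊢
    omega
  have hbad := (card_le_card hsub).trans <| (card_union_le _ _).trans <| add_le_add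
    (card_filter_mod_near_boundary_le n k (hm.trans_le hmq)) (card_filter_lt_add_le n (m * q) q)
  have hm' : m ≤ n := (Nat.le_mul_self m).trans hmm
  calc _ ≤ ((q + 1) * (2 * k) + (m + q)) * m :=
        Nat.mul_le_mul_right _ (hbad.trans (add_le_add (by gcongr) (by omega)))
    _ ≤ (4 * k + 2) * n := by nlinarith [Nat.mul_le_mul_left k hMn, Nat.mul_le_mul_left k hm']

lemma sample_point_bounds {i q m N : ℝ} (hm : 1 ≤ m) (hmq : m ≤ q) (hqN : m * q ≤ N)
    (hNm : N ≤ m * q + m) (hi : 0 ≤ i) (hiN : i + 1 ≤ N) (hiq : i + q ≤ m * q) :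
    (i / q + 1) / m ∈ Set.Icc (0 : ℝ) 1 ∧ (i + 1) / N ∈ Set.Icc (0 : ℝ) 1 ∧
      |(i / q + 1) / m - (i + 1) / N| ≤ 2 / m := by
  have hq : 0 < q := by linarith
  have hN : 0 < N := by linarith
  have hx : (i / q + 1) / m = (i + q) / (m * q) := by field_simp
  refine ⟨⟨by positivity, ?_⟩, ⟨by positivity, (div_le_one hN).2 hiN⟩, abs_le.2 ⟨?_, ?_⟩⟩
  · rw [hx, div_le_one (by positivity)]; exact hiq
  · have : (i + 1) / N ≤ (i + q) / (m * q) :=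
      div_le_div₀ (by linarith) (by linarith) (by positivity) hqN
    have : 0 ≤ 2 / m := by positivity
    linarith
  · rw [hx, div_sub_div _ _ (by positivity) hN.ne', div_le_div_iff₀ (by positivity) (by linarith)]
    nlinarith [mul_le_mul_of_nonneg_left (show N - m * q ≤ m by linarith) hi,
      mul_le_mul_of_nonneg_right (show i ≤ N by linarith) (show 0 ≤ m by linarith),
      mul_le_mul_of_nonneg_left hmq hN.le]

lemma norm_LTop_sub_apply_le {a : ℝ → ℂ} {c : ℤ → ℂ} {k n : ℕ} {L : NNReal} {C : ℝ}
    (hL : LipschitzOnWith L a (Set.Icc 0 1)) (hC : ∀ l, ‖c l‖ ≤ C)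
    (hc : ∀ l : ℤ, (k : ℤ) < |l| → c l = 0) {i : Fin n} (hi : i ∈ goodRows k n) (j : Fin n) :
    ‖(LTop a c n - diagSampling a n * toeplitzM c n) i j‖ ≤ L * (2 / Nat.sqrt n) * C := by
  obtain ⟨hm, hmq, hMn, hnM⟩ := sqrt_block_bounds i.pos
  have hlast := (mem_filter.1 hi).2.2.2
  obtain ⟨hx, hy, hxy⟩ := sample_point_bounds (i := (i : ℝ)) (q := (n / Nat.sqrt n : ℕ))
    (m := Nat.sqrt n) (N := n) (Nat.one_le_cast.2 hm) (by exact_mod_cast hmq)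
    (by exact_mod_cast hMn) (by exact_mod_cast hnM.le) (by positivity) (by exact_mod_cast i.2)
    (by exact_mod_cast hlast)
  rw [LTop_sub_apply_of_mem_goodRows hc hi, norm_mul]
  exact mul_le_mul (hL.norm_sub_le_of_le hx hy hxy) (hC _) (norm_nonneg _) (by positivity)

lemma rank_rowRestrict_goodRows_compl_div_le (k n : ℕ) (A : Matrix (Fin n) (Fin n) ℂ) :
    ((rowRestrict (goodRows k n)ᶜ A).rank : ℝ) / n ≤ (4 * k + 2) / Nat.sqrt n := by
  rcases Nat.eq_zero_or_pos n with rfl | hn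
  · simp
  rw [div_le_div_iff₀ (by positivity) (by exact_mod_cast Nat.sqrt_pos.2 hn)]
  exact_mod_cast (Nat.mul_le_mul_right _ (rank_rowRestrict_le _ _)).trans
    (card_goodRows_compl_mul_le k n)

lemma singVals_rowRestrict_goodRows_le {a : ℝ → ℂ} {c : ℤ → ℂ} {k n : ℕ} {L : NNReal} {C : ℝ}
    (hL : LipschitzOnWith L a (Set.Icc 0 1)) (hC : ∀ l, ‖c l‖ ≤ C)
    (hc : ∀ l : ℤ, (k : ℤ) < |l| → c l = 0) (t : Fin n) :
    singVals (rowRestrict (goodRows k n) (LTop a c n - diagSampling a n * toeplitzM c n)) t ≤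
      (2 * k + 1) * (L * (2 / Nat.sqrt n) * C) := by
  refine singVals_le_of_band (fun i j hij => ?_) (fun i j => ?_) t <;>
    simp only [rowRestrict, of_apply] <;> split_ifs with hi
  · rw [LTop_sub_apply_of_mem_goodRows hc hi, hc _ hij, mul_zero]
  · rfl
  · exact norm_LTop_sub_apply_le hL hC hc hi j
  · rw [norm_zero]; have := (norm_nonneg _).trans (hC 0); positivity

/-- `LT_n(a,f) - D_n(a) T_n(f)` splits as a rank-`o(n)` plus a norm-`o(1)` sequence;
consequently `{LT_n(a,f)}_n` and `{D_n(a)T_n(f)}_n` are acs equivalent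
(their difference is zero-distributed).  (The spectral norm of a matrix is its
largest singular value, here written `⨆ i, singVals _ i`.) -/
theorem LT_acs_equiv_DT (a : ℝ → ℂ) (ha : ContDiffOn ℝ 1 a (Set.Icc 0 1))
    (m : ℕ) (c : ℤ → ℂ) (hc : ∀ k : ℤ, (m : ℤ) < |k| → c k = 0) :
    ∃ R N : ∀ n : ℕ, Matrix (Fin n) (Fin n) ℂ,
      (∀ n, LTop a c n - diagSampling a n * toeplitzM c n = R n + N n) ∧
      Tendsto (fun n : ℕ => ((R n).rank : ℝ) / (n : ℝ)) atTop (nhds 0) ∧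
      Tendsto (fun n : ℕ => ⨆ i, singVals (N n) i) atTop (nhds 0) ∧
      ZeroDist (fun n => LTop a c n - diagSampling a n * toeplitzM c n) := by
  obtain ⟨L, hL⟩ := ha.exists_lipschitzOnWith one_ne_zero (convex_Icc 0 1) isCompact_Icc
  obtain ⟨C, hC⟩ := exists_forall_norm_le_of_eq_zero_of_lt_abs hc
  have hC0 : 0 ≤ C := (norm_nonneg _).trans (hC 0)
  set D := fun n => LTop a c n - diagSampling a n * toeplitzM c n
  have hDRN : ∀ n, D n = rowRestrict (goodRows m n)ᶜ (D n) + rowRestrict (goodRows m n) (D n) :=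
    fun n => (rowRestrict_compl_add_rowRestrict _ _).symm
  have hR : Tendsto (fun n => ((rowRestrict (goodRows m n)ᶜ (D n)).rank : ℝ) / n) atTop
      (nhds 0) :=
    squeeze_zero (fun n => by positivity) (fun n => rank_rowRestrict_goodRows_compl_div_le m n _)
      (tendsto_div_sqrt_atTop_nhds_zero _)
  have hN : Tendsto (fun n => ⨆ i, singVals (rowRestrict (goodRows m n) (D n)) i) atTop
      (nhds 0) :=
    squeeze_zero (fun n => Real.iSup_nonneg (singVals_nonneg _))
      (fun n => Real.iSup_le (singVals_rowRestrict_goodRows_le hL hC hc) (by positivity))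
      ((tendsto_div_sqrt_atTop_nhds_zero ((2 * m + 1) * (L * 2 * C))).congr fun n => by ring)
  refine ⟨_, _, hDRN, hR, hN, ?_⟩
  convert zeroDist_add_of_rank_of_singVals _ _ hR hN using 1
  exact funext hDRN
end

section
/- Let $\{D_n\}_n$ and $\{D'_n\}_n$ be sequences of diagonal matrices with spectral symbols $h$ and $k$ respectively on the same domain $D$. If $\{D_n\}_n$ and $\{D'_n\}_n$ are acs equivalent (their difference is zero-distributed), then $k$ is a rearranged version of $h$, i.e. $\frac{1}{l(D)}\int_D F(h) = \frac{1}{l(D)}\int_D F(k)$ for every $F\in C_c(\mathbb{C})$. -/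
/-!
For diagonal matrices the eigenvalues are the diagonal entries and the singular values their
moduli. Testing the zero-distributed difference `diag(d n - d' n)` against a bump function
shows that, for every `δ > 0`, the proportion of indices with `‖d n i - d' n i‖ ≥ δ` tends
to `0`. A compactly supported continuous `F` is bounded and uniformly continuous, so the
averages of `F (d n i)` and of `F (d' n i)` differ by at most `ε` asymptotically; they
therefore have the same limit, and the two symbol integrals agree.
-/

open MeasureTheory Filter Matrix

open Finset Topology

open Polynomial in
theorem Matrix.roots_charpoly_diagonal {n R : Type*} [Fintype n] [DecidableEq n] [CommRing R]
    [IsDomain R] (c : n → R) :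
    (diagonal c).charpoly.roots = univ.val.map c := by
  rw [charpoly_diagonal, roots_prod _ _ (prod_ne_zero_iff.mpr fun i _ => X_sub_C_ne_zero (c i))]
  simp

theorem Matrix.sum_roots_charpoly_diagonal {n R M : Type*} [Fintype n] [DecidableEq n] [CommRing R]
    [IsDomain R] [AddCommMonoid M] (c : n → R) (F : R → M) :
    ((diagonal c).charpoly.roots.map F).sum = ∑ i, F (c i) := by
  rw [roots_charpoly_diagonal, Multiset.map_map]
  rfl

theorem Matrix.map_eigenvalues_conjTranspose_mul_self_diagonal {n 𝕜 : Type*} [Fintype n]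
    [DecidableEq n] [RCLike 𝕜] (c : n → 𝕜) :
    univ.val.map (isHermitian_conjTranspose_mul_self (diagonal c)).eigenvalues
      = univ.val.map fun i => ‖c i‖ ^ 2 := by
  set hH := isHermitian_conjTranspose_mul_self (diagonal c)
  have hdiag : (diagonal c)ᴴ * diagonal c = diagonal fun i => ((‖c i‖ ^ 2 : ℝ) : 𝕜) := by
    rw [diagonal_conjTranspose, diagonal_mul_diagonal]
    congr 1
    ext i
    simp [RCLike.conj_mul]
  apply Multiset.map_injective (RCLike.ofReal_injective (K := 𝕜))
  rw [Multiset.map_map, Multiset.map_map]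
  refine hH.roots_charpoly_eq_eigenvalues.symm.trans ?_
  rw [hdiag, roots_charpoly_diagonal]
  rfl

theorem sum_singVals_diagonal {n : ℕ} (c : Fin n → ℂ) (G : ℝ → ℂ) :
    ∑ i, G (singVals (diagonal c) i) = ∑ i, G ‖c i‖ := by
  have := congrArg (fun s => (s.map fun t => G √t).sum)
    (map_eigenvalues_conjTranspose_mul_self_diagonal c)
  simpa only [singVals, Multiset.map_map, Function.comp_def, Real.sqrt_sq (norm_nonneg _),
    ← Finset.sum_eq_multiset_sum] using this

theorem tendsto_card_le_div_of_tendsto_average {s : ∀ n : ℕ, Fin n → ℝ}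
    (hs : ∀ G : C(ℝ, ℂ), HasCompactSupport G →
      Tendsto (fun n : ℕ => (n : ℂ)⁻¹ * ∑ i, G (s n i)) atTop (𝓝 (G 0)))
    {δ : ℝ} (hδ : 0 < δ) :
    Tendsto (fun n : ℕ => (#{i | δ ≤ s n i} : ℝ) / n) atTop (𝓝 0) := by
  -- `1 - f` dominates the indicator of `[δ, ∞)` and averages to `0`.
  let f : ContDiffBump (0 : ℝ) := ⟨δ / 2, δ, half_pos hδ, half_lt_self hδ⟩
  have hf0 : f 0 = 1 := f.one_of_mem_closedBall (Metric.mem_closedBall_self f.rIn_pos.le)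
  have hf : Tendsto (fun n : ℕ => (n : ℝ)⁻¹ * ∑ i, f (s n i)) atTop (𝓝 1) := by
    have := hs ⟨fun t => (f t : ℂ), Complex.continuous_ofReal.comp f.continuous⟩
      (f.hasCompactSupport.comp_left Complex.ofReal_zero)
    rw [← tendsto_ofReal_iff]
    simpa [hf0] using this
  refine squeeze_zero' (Eventually.of_forall fun n => by positivity) ?_
    (by simpa using (tendsto_const_nhds (x := (1 : ℝ))).sub hf)
  filter_upwards [eventually_ne_atTop 0] with n hn
  have hfar : (#{i | δ ≤ s n i} : ℝ) ≤ ∑ i, (1 - f (s n i)) := by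
    rw [← sum_boole]
    refine sum_le_sum fun i _ => ?_
    split_ifs with hi
    · rw [f.zero_of_le_dist (by simpa [Real.dist_eq, le_abs] using Or.inl hi), sub_zero]
    · linarith [f.le_one (x := s n i)]
  calc (#{i | δ ≤ s n i} : ℝ) / n ≤ (n : ℝ)⁻¹ * ∑ i, (1 - f (s n i)) := by
        rw [div_eq_inv_mul]; gcongr
    _ = 1 - (n : ℝ)⁻¹ * ∑ i, f (s n i) := by
        rw [sum_sub_distrib, mul_sub]; simp [hn]

theorem tendsto_average_sub_of_card_le_dist {E : Type*} [PseudoMetricSpace E] {F : E → ℂ}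
    (hF : UniformContinuous F) {M : ℝ} (hM : ∀ x, ‖F x‖ ≤ M) {a b : ∀ n : ℕ, Fin n → E}
    (hab : ∀ δ > 0,
      Tendsto (fun n : ℕ => (#{i | δ ≤ dist (a n i) (b n i)} : ℝ) / n) atTop (𝓝 0)) :
    Tendsto (fun n : ℕ => (n : ℂ)⁻¹ * ∑ i, F (a n i) - (n : ℂ)⁻¹ * ∑ i, F (b n i)) atTop
      (𝓝 0) := by
  rw [Metric.tendsto_nhds]
  intro ε hε
  obtain ⟨δ, hδ, hFδ⟩ := Metric.uniformContinuous_iff.mp hF (ε / 2) (half_pos hε)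
  have hfar := (hab δ hδ).const_mul (2 * M)
  rw [mul_zero] at hfar
  filter_upwards [hfar.eventually (gt_mem_nhds (half_pos hε))] with n hn
  have hpt : ∀ i, ‖F (a n i) - F (b n i)‖
      ≤ ε / 2 + 2 * M * if δ ≤ dist (a n i) (b n i) then 1 else 0 := by
    intro i
    split_ifs with hi
    · linarith [norm_sub_le (F (a n i)) (F (b n i)), hM (a n i), hM (b n i)]
    · simpa [← dist_eq_norm] using (hFδ (not_le.mp hi)).le
  have hsum : ‖∑ i, (F (a n i) - F (b n i))‖
      ≤ n * (ε / 2) + 2 * M * #{i | δ ≤ dist (a n i) (b n i)} := by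
    refine (norm_sum_le _ _).trans ((sum_le_sum fun i _ => hpt i).trans_eq ?_)
    rw [sum_add_distrib, ← mul_sum, sum_boole]
    simp
  have hn1 : (n : ℝ)⁻¹ * n ≤ 1 := inv_mul_le_one_of_le₀ le_rfl n.cast_nonneg
  rw [dist_zero_right, ← mul_sub, ← sum_sub_distrib, norm_mul, norm_inv, Complex.norm_natCast]
  calc (n : ℝ)⁻¹ * ‖∑ i, (F (a n i) - F (b n i))‖
      ≤ (n : ℝ)⁻¹ * n * (ε / 2) + 2 * M * ((#{i | δ ≤ dist (a n i) (b n i)} : ℝ) / n) := by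
        rw [div_eq_inv_mul]
        exact (mul_le_mul_of_nonneg_left hsum (by positivity)).trans_eq (by ring)
    _ < ε := by linarith [mul_le_of_le_one_left (half_pos hε).le hn1]

theorem diag_acs_equiv_rearranged_general {q : ℕ}
    (Dset : Set (EuclideanSpace ℝ (Fin q)))
    (d d' : ∀ n : ℕ, Fin n → ℂ) (h k : EuclideanSpace ℝ (Fin q) → ℂ)
    (hd : SpecSymb Dset (fun n => Matrix.diagonal (d n)) h)
    (hd' : SpecSymb Dset (fun n => Matrix.diagonal (d' n)) k)
    (hacs : ZeroDist (fun n => Matrix.diagonal (d n) - Matrix.diagonal (d' n))) :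
    ∀ F : C(ℂ, ℂ), HasCompactSupport F →
      ((volume Dset).toReal)⁻¹ • ∫ x in Dset, F (h x) =
      ((volume Dset).toReal)⁻¹ • ∫ x in Dset, F (k x) := by
  intro F hF
  have hfar : ∀ δ > 0,
      Tendsto (fun n : ℕ => (#{i | δ ≤ dist (d n i) (d' n i)} : ℝ) / n) atTop (𝓝 0) := by
    refine fun δ hδ => tendsto_card_le_div_of_tendsto_average (fun G hG => ?_) hδ
    simpa only [diagonal_sub, sum_singVals_diagonal, dist_eq_norm] using hacs G hG
  obtain ⟨M, hM⟩ := hF.exists_bound_of_continuous F.continuous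
  have hdiff := tendsto_average_sub_of_card_le_dist
    (hF.uniformContinuous_of_continuous F.continuous) hM hfar
  simp only [SpecSymb, sum_roots_charpoly_diagonal] at hd hd'
  exact tendsto_nhds_unique (by simpa using (hd F hF).sub hdiff) (hd' F hF)

/-- If two diagonal sequences have spectral symbols `h` and `k` on the same
domain and are acs equivalent, then `k` is a rearranged version of `h`. -/
theorem diag_acs_equiv_rearranged {q : ℕ}
    (Dset : Set (EuclideanSpace ℝ (Fin q))) (hD0 : 0 < volume Dset) (hD1 : volume Dset < ⊤)
    (d d' : ∀ n : ℕ, Fin n → ℂ) (h k : EuclideanSpace ℝ (Fin q) → ℂ)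
    (hd : SpecSymb Dset (fun n => Matrix.diagonal (d n)) h)
    (hd' : SpecSymb Dset (fun n => Matrix.diagonal (d' n)) k)
    (hacs : ZeroDist (fun n => Matrix.diagonal (d n) - Matrix.diagonal (d' n))) :
    ∀ F : C(ℂ, ℂ), HasCompactSupport F →
      ((volume Dset).toReal)⁻¹ • ∫ x in Dset, F (h x) =
      ((volume Dset).toReal)⁻¹ • ∫ x in Dset, F (k x) :=
  diag_acs_equiv_rearranged_general Dset d d' h k hd hd' hacs
end

section
/- There exists a sequence $\{A_n\}_n$ of matrices with $A_n^2 = 0$ for all $n$ and with singular value symbol $\chi_{[0,1/2]}$ on $[0,1]$, such that no sequence $\{N_n\}_n$ of normal matrices is acs equivalent to $\{A_n\}_n$. Concretely, one may take $A_{2n} = \begin{pmatrix} 0_n & I_n \\ 0_n & 0_n\end{pmatrix}$ and the analogous odd-size matrices. -/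
/-!
Write `#(X, t)` for the number of singular values of `X` exceeding `t`. By the Courant–Fischer
principle, `n - #(X, t)` is the largest dimension of a subspace on which `‖X v‖ ≤ t ‖v‖`; this
gives the Weyl-type bounds `#(X + Y, s + t) ≤ #(X, s) + #(Y, t)` and
`#(X * Y, s * t) ≤ #(X, s) + #(Y, t)`. For normal `N`, `N²` has the squared singular values of `N`.

If `E = A - N` is zero-distributed, then eventually `#(E, 1/10)` is a small fraction of `n`.
Since `A` has `n / 2` singular values equal to `1`, `N = A - E` has nearly `n / 2` singular values
above `1/2`, hence `N²` nearly as many above `1/4`. But `A² = 0` gives `N² = -(A E) - E A + E²`,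
which has at most `4 #(E, 1/10)` singular values above `21/100`.
-/

open MeasureTheory Filter Matrix

variable {n : ℕ}

lemma Submodule.finrank_add_finrank_le_finrank_inf_add {K E : Type*} [DivisionRing K]
    [AddCommGroup E] [Module K E] [FiniteDimensional K E] (V W : Submodule K E) :
    Module.finrank K V + Module.finrank K W ≤ Module.finrank K ↥(V ⊓ W) + Module.finrank K E := by
  rw [← Submodule.finrank_sup_add_finrank_inf_eq, add_comm]
  exact Nat.add_le_add_left (Submodule.finrank_le _) _

lemma Submodule.finrank_le_finrank_comap {K E : Type*} [DivisionRing K] [AddCommGroup E]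
    [Module K E] [FiniteDimensional K E] (f : E →ₗ[K] E) (W : Submodule K E) :
    Module.finrank K W ≤ Module.finrank K (W.comap f) := by
  have hker : W.comap f = LinearMap.ker (W.mkQ ∘ₗ f) := by
    rw [LinearMap.ker_comp, Submodule.ker_mkQ]
  have hrange := LinearMap.finrank_range_add_finrank_ker (W.mkQ ∘ₗ f)
  have hquot := Submodule.finrank_quotient_add_finrank W
  have := Submodule.finrank_le (LinearMap.range (W.mkQ ∘ₗ f))
  rw [hker]
  omega

lemma OrthonormalBasis.repr_eq_zero_of_mem_span_image {ι 𝕜 E : Type*} [Fintype ι] [RCLike 𝕜]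
    [NormedAddCommGroup E] [InnerProductSpace 𝕜 E] (b : OrthonormalBasis ι 𝕜 E) {s : Set ι}
    {v : E} (hv : v ∈ Submodule.span 𝕜 (b '' s)) {i : ι} (hi : i ∉ s) : b.repr v i = 0 := by
  rw [← b.coe_toBasis] at hv
  rw [← b.coe_toBasis_repr_apply]
  exact Finsupp.notMem_support_iff.mp fun h =>
    hi (b.toBasis.repr_support_subset_of_mem_span s hv h)

lemma OrthonormalBasis.finrank_span_image {ι 𝕜 E : Type*} [Fintype ι] [RCLike 𝕜]
    [NormedAddCommGroup E] [InnerProductSpace 𝕜 E] (b : OrthonormalBasis ι 𝕜 E) (s : Finset ι) :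
    Module.finrank 𝕜 (Submodule.span 𝕜 (b '' s)) = s.card := by
  rw [Set.image_eq_range]
  exact (finrank_span_eq_card (b.orthonormal.linearIndependent.comp _ Subtype.val_injective)).trans
    (Fintype.card_coe s)

lemma OrthonormalBasis.norm_sq_eq_sum_norm_repr_sq {ι 𝕜 E : Type*} [Fintype ι] [RCLike 𝕜]
    [NormedAddCommGroup E] [InnerProductSpace 𝕜 E] (b : OrthonormalBasis ι 𝕜 E) (v : E) :
    ‖v‖ ^ 2 = ∑ i, ‖b.repr v i‖ ^ 2 := by
  rw [← b.repr.norm_map, EuclideanSpace.norm_sq_eq]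

lemma Matrix.IsHermitian.repr_toEuclideanLin {H : Matrix (Fin n) (Fin n) ℂ} (hH : H.IsHermitian)
    (v : EuclideanSpace ℂ (Fin n)) (i : Fin n) :
    hH.eigenvectorBasis.repr (toEuclideanLin H v) i =
      hH.eigenvalues i * hH.eigenvectorBasis.repr v i := by
  have hb : toEuclideanLin H (hH.eigenvectorBasis i) =
      (hH.eigenvalues i : ℂ) • hH.eigenvectorBasis i := by
    ext j
    simpa [toLpLin_apply, Complex.real_smul] using congrFun (hH.mulVec_eigenvectorBasis i) j
  rw [OrthonormalBasis.repr_apply_apply, OrthonormalBasis.repr_apply_apply,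
    ← (isSymmetric_toEuclideanLin_iff.mpr hH) _ v, hb, inner_smul_left, Complex.conj_ofReal]

lemma Matrix.IsHermitian.sum_comp_eigenvalues_of_eq_diagonal {H : Matrix (Fin n) (Fin n) ℂ}
    (hH : H.IsHermitian) {d : Fin n → ℝ} (hd : H = diagonal fun i => (d i : ℂ)) {M : Type*}
    [AddCommMonoid M] (g : ℝ → M) : ∑ i, g (hH.eigenvalues i) = ∑ i, g (d i) := by
  subst hd
  have hroots := hH.roots_charpoly_eq_eigenvalues
  rw [charpoly_diagonal, Polynomial.roots_prod _ _
    (Finset.prod_ne_zero_iff.mpr fun i _ => Polynomial.X_sub_C_ne_zero _)] at hroots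
  simp only [Polynomial.roots_X_sub_C, Multiset.bind_singleton] at hroots
  simpa [Finset.sum_eq_multiset_sum, Multiset.map_map, Function.comp_def] using
    congrArg (fun s => (s.map (g ∘ Complex.re)).sum) hroots.symm

noncomputable abbrev rightSingBasis (X : Matrix (Fin n) (Fin n) ℂ) :
    OrthonormalBasis (Fin n) ℂ (EuclideanSpace ℂ (Fin n)) :=
  (isHermitian_conjTranspose_mul_self X).eigenvectorBasis

open scoped ComplexOrder in
lemma singVals_sq (X : Matrix (Fin n) (Fin n) ℂ) (i : Fin n) :
    singVals X i ^ 2 = (isHermitian_conjTranspose_mul_self X).eigenvalues i :=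
  Real.sq_sqrt ((posSemidef_conjTranspose_mul_self X).eigenvalues_nonneg i)

lemma norm_toEuclideanLin_sq_eq_re_inner (X : Matrix (Fin n) (Fin n) ℂ)
    (v : EuclideanSpace ℂ (Fin n)) :
    ‖toEuclideanLin X v‖ ^ 2 = RCLike.re (inner ℂ v (toEuclideanLin (Xᴴ * X) v)) := by
  rw [toLpLin_mul_same, LinearMap.comp_apply, toEuclideanLin_conjTranspose_eq_adjoint,
    LinearMap.adjoint_inner_right, inner_self_eq_norm_sq]

lemma norm_toEuclideanLin_sq (X : Matrix (Fin n) (Fin n) ℂ) (v : EuclideanSpace ℂ (Fin n)) :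
    ‖toEuclideanLin X v‖ ^ 2 = ∑ i, singVals X i ^ 2 * ‖(rightSingBasis X).repr v i‖ ^ 2 := by
  rw [norm_toEuclideanLin_sq_eq_re_inner, ← (rightSingBasis X).repr.inner_map_map,
    PiLp.inner_apply, map_sum]
  refine Finset.sum_congr rfl fun i _ => ?_
  rw [(isHermitian_conjTranspose_mul_self X).repr_toEuclideanLin, singVals_sq,
    RCLike.inner_apply', mul_left_comm, RCLike.conj_mul, RCLike.re_to_complex,
    Complex.re_ofReal_mul, ← RCLike.ofReal_pow]
  exact congrArg _ (Complex.ofReal_re _)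

noncomputable def countSingValsGT (X : Matrix (Fin n) (Fin n) ℂ) (t : ℝ) : ℕ :=
  (Finset.univ.filter fun i => t < singVals X i).card

lemma norm_toEuclideanLin_le_of_singVals_le {X : Matrix (Fin n) (Fin n) ℂ} {t : ℝ}
    (ht : 0 ≤ t) {v : EuclideanSpace ℂ (Fin n)}
    (h : ∀ i, (rightSingBasis X).repr v i ≠ 0 → singVals X i ≤ t) :
    ‖toEuclideanLin X v‖ ≤ t * ‖v‖ := by
  refine (pow_le_pow_iff_left₀ (norm_nonneg _) (by positivity) two_ne_zero).mp ?_
  rw [norm_toEuclideanLin_sq, mul_pow, (rightSingBasis X).norm_sq_eq_sum_norm_repr_sq,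
    Finset.mul_sum]
  refine Finset.sum_le_sum fun i _ => ?_
  by_cases hi : (rightSingBasis X).repr v i = 0
  · simp [hi]
  · gcongr
    · exact Real.sqrt_nonneg _
    · exact h i hi

lemma lt_norm_toEuclideanLin_of_lt_singVals {X : Matrix (Fin n) (Fin n) ℂ} {t : ℝ}
    (ht : 0 ≤ t) {v : EuclideanSpace ℂ (Fin n)} (hv : v ≠ 0)
    (h : ∀ i, (rightSingBasis X).repr v i ≠ 0 → t < singVals X i) :
    t * ‖v‖ < ‖toEuclideanLin X v‖ := by
  obtain ⟨j, hj⟩ : ∃ j, (rightSingBasis X).repr v j ≠ 0 := by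
    by_contra! h0
    exact hv ((rightSingBasis X).repr.map_eq_zero_iff.mp (PiLp.ext h0))
  refine (pow_lt_pow_iff_left₀ (by positivity) (norm_nonneg _) two_ne_zero).mp ?_
  rw [norm_toEuclideanLin_sq, mul_pow, (rightSingBasis X).norm_sq_eq_sum_norm_repr_sq,
    Finset.mul_sum]
  refine Finset.sum_lt_sum (fun i _ => ?_) ⟨j, Finset.mem_univ j, ?_⟩
  · by_cases hi : (rightSingBasis X).repr v i = 0
    · simp [hi]
    · gcongr
      exact (h i hi).le
  · gcongr
    exact h j hj

lemma exists_submodule_finrank_add_countSingValsGT_eq (X : Matrix (Fin n) (Fin n) ℂ) {t : ℝ}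
    (ht : 0 ≤ t) :
    ∃ V : Submodule ℂ (EuclideanSpace ℂ (Fin n)),
      Module.finrank ℂ V + countSingValsGT X t = n ∧
      ∀ v ∈ V, ‖toEuclideanLin X v‖ ≤ t * ‖v‖ := by
  set s := Finset.univ.filter fun i => singVals X i ≤ t
  refine ⟨Submodule.span ℂ (rightSingBasis X '' s), ?_, fun v hv => ?_⟩
  · rw [OrthonormalBasis.finrank_span_image, countSingValsGT]
    simpa [s, not_le] using Finset.card_filter_add_card_filter_not
      (s := Finset.univ) (p := fun i => singVals X i ≤ t)
  · refine norm_toEuclideanLin_le_of_singVals_le ht fun i hi => ?_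
    by_contra hlt
    exact hi (OrthonormalBasis.repr_eq_zero_of_mem_span_image _ hv (by simpa [s] using hlt))

lemma finrank_add_countSingValsGT_le (X : Matrix (Fin n) (Fin n) ℂ) {t : ℝ} (ht : 0 ≤ t)
    {V : Submodule ℂ (EuclideanSpace ℂ (Fin n))}
    (hV : ∀ v ∈ V, ‖toEuclideanLin X v‖ ≤ t * ‖v‖) :
    Module.finrank ℂ V + countSingValsGT X t ≤ n := by
  set W := Submodule.span ℂ (rightSingBasis X '' (Finset.univ.filter fun i => t < singVals X i))
  have hdisj : Disjoint V W := by
    refine Submodule.disjoint_def.mpr fun v hvV hvW => ?_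
    by_contra hv
    refine (hV v hvV).not_gt (lt_norm_toEuclideanLin_of_lt_singVals ht hv fun i hi => ?_)
    by_contra hle
    exact hi (OrthonormalBasis.repr_eq_zero_of_mem_span_image _ hvW (by simpa using hle))
  have := Submodule.finrank_add_finrank_le_of_disjoint hdisj
  rwa [OrthonormalBasis.finrank_span_image, finrank_euclideanSpace_fin] at this

lemma countSingValsGT_antitone (X : Matrix (Fin n) (Fin n) ℂ) : Antitone (countSingValsGT X) :=
  fun _ _ hst => Finset.card_le_card fun i hi => by
    simp only [Finset.mem_filter] at hi ⊢
    exact ⟨hi.1, hst.trans_lt hi.2⟩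

lemma singVals_eq_of_conjTranspose_mul_self_eq {X Y : Matrix (Fin n) (Fin n) ℂ}
    (h : Xᴴ * X = Yᴴ * Y) : singVals X = singVals Y := by
  unfold singVals
  rw [(isHermitian_conjTranspose_mul_self X).eigenvalues_eq_eigenvalues_iff
    (isHermitian_conjTranspose_mul_self Y) |>.mpr (by rw [h])]

lemma countSingValsGT_congr {X Y : Matrix (Fin n) (Fin n) ℂ} (h : Xᴴ * X = Yᴴ * Y) :
    countSingValsGT X = countSingValsGT Y := by
  unfold countSingValsGT
  rw [singVals_eq_of_conjTranspose_mul_self_eq h]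

lemma countSingValsGT_neg (X : Matrix (Fin n) (Fin n) ℂ) :
    countSingValsGT (-X) = countSingValsGT X :=
  countSingValsGT_congr (by simp)

lemma countSingValsGT_add_le (X Y : Matrix (Fin n) (Fin n) ℂ) {s t : ℝ} (hs : 0 ≤ s)
    (ht : 0 ≤ t) :
    countSingValsGT (X + Y) (s + t) ≤ countSingValsGT X s + countSingValsGT Y t := by
  obtain ⟨V, hVrank, hV⟩ := exists_submodule_finrank_add_countSingValsGT_eq X hs
  obtain ⟨W, hWrank, hW⟩ := exists_submodule_finrank_add_countSingValsGT_eq Y ht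
  have hVW : ∀ v ∈ V ⊓ W, ‖toEuclideanLin (X + Y) v‖ ≤ (s + t) * ‖v‖ := fun v hv =>
    calc ‖toEuclideanLin (X + Y) v‖ = ‖toEuclideanLin X v + toEuclideanLin Y v‖ := by
          rw [map_add, LinearMap.add_apply]
      _ ≤ s * ‖v‖ + t * ‖v‖ := (norm_add_le _ _).trans (add_le_add (hV v hv.1) (hW v hv.2))
      _ = (s + t) * ‖v‖ := (add_mul _ _ _).symm
  have := finrank_add_countSingValsGT_le (X + Y) (add_nonneg hs ht) hVW
  have := V.finrank_add_finrank_le_finrank_inf_add W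
  rw [finrank_euclideanSpace_fin] at this
  omega

lemma countSingValsGT_mul_le (X Y : Matrix (Fin n) (Fin n) ℂ) {s t : ℝ} (hs : 0 ≤ s)
    (ht : 0 ≤ t) :
    countSingValsGT (X * Y) (s * t) ≤ countSingValsGT X s + countSingValsGT Y t := by
  obtain ⟨V, hVrank, hV⟩ := exists_submodule_finrank_add_countSingValsGT_eq X hs
  obtain ⟨W, hWrank, hW⟩ := exists_submodule_finrank_add_countSingValsGT_eq Y ht
  have hWV : ∀ v ∈ W ⊓ V.comap (toEuclideanLin Y),
      ‖toEuclideanLin (X * Y) v‖ ≤ (s * t) * ‖v‖ := fun v hv =>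
    calc ‖toEuclideanLin (X * Y) v‖ = ‖toEuclideanLin X (toEuclideanLin Y v)‖ := by
          rw [toLpLin_mul_same, LinearMap.comp_apply]
      _ ≤ s * (t * ‖v‖) := (hV _ hv.2).trans (mul_le_mul_of_nonneg_left (hW v hv.1) hs)
      _ = (s * t) * ‖v‖ := (mul_assoc _ _ _).symm
  have := finrank_add_countSingValsGT_le (X * Y) (mul_nonneg hs ht) hWV
  have := W.finrank_add_finrank_le_finrank_inf_add (V.comap (toEuclideanLin Y))
  have := V.finrank_le_finrank_comap (toEuclideanLin Y)
  rw [finrank_euclideanSpace_fin] at *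
  omega

lemma countSingValsGT_le_conjTranspose_mul_self (X : Matrix (Fin n) (Fin n) ℂ) {t : ℝ}
    (ht : 0 ≤ t) : countSingValsGT X t ≤ countSingValsGT (Xᴴ * X) (t ^ 2) := by
  obtain ⟨V, hVrank, hV⟩ :=
    exists_submodule_finrank_add_countSingValsGT_eq (Xᴴ * X) (sq_nonneg t)
  suffices hX : ∀ v ∈ V, ‖toEuclideanLin X v‖ ≤ t * ‖v‖ by
    have := finrank_add_countSingValsGT_le X ht hX
    omega
  intro v hv
  refine (pow_le_pow_iff_left₀ (norm_nonneg _) (by positivity) two_ne_zero).mp ?_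
  calc ‖toEuclideanLin X v‖ ^ 2 = RCLike.re (inner ℂ v (toEuclideanLin (Xᴴ * X) v)) :=
        norm_toEuclideanLin_sq_eq_re_inner X v
    _ ≤ ‖v‖ * ‖toEuclideanLin (Xᴴ * X) v‖ := (RCLike.re_le_norm _).trans (norm_inner_le_norm _ _)
    _ ≤ ‖v‖ * (t ^ 2 * ‖v‖) := mul_le_mul_of_nonneg_left (hV v hv) (norm_nonneg v)
    _ = (t * ‖v‖) ^ 2 := by ring

lemma countSingValsGT_le_mul_self_of_isStarNormal {N : Matrix (Fin n) (Fin n) ℂ}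
    [IsStarNormal N] {t : ℝ} (ht : 0 ≤ t) :
    countSingValsGT N t ≤ countSingValsGT (N * N) (t ^ 2) := by
  have hcomm : Nᴴ * N = N * Nᴴ := star_comm_self' N
  have hsq : (N * N)ᴴ * (N * N) = (Nᴴ * N)ᴴ * (Nᴴ * N) :=
    calc (N * N)ᴴ * (N * N) = Nᴴ * (Nᴴ * N) * N := by simp only [conjTranspose_mul, mul_assoc]
      _ = Nᴴ * (N * Nᴴ) * N := by rw [hcomm]
      _ = (Nᴴ * N)ᴴ * (Nᴴ * N) := by
        simp only [conjTranspose_mul, conjTranspose_conjTranspose, mul_assoc]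
  rw [countSingValsGT_congr hsq]
  exact countSingValsGT_le_conjTranspose_mul_self N ht

lemma countSingValsGT_le_of_mul_self_eq_zero {A N : Matrix (Fin n) (Fin n) ℂ} [IsStarNormal N]
    (hA : A * A = 0) (hA1 : countSingValsGT A 1 = 0) :
    countSingValsGT A (3 / 5) ≤ 5 * countSingValsGT (A - N) (1 / 10) := by
  set E := A - N
  -- The thresholds fit because `1/2 + 1/10 = 3/5` and `1/10 + 1/10 + 1/100 ≤ (1/2)^2`.
  have hN :
      countSingValsGT A (3 / 5) ≤ countSingValsGT N (1 / 2) + countSingValsGT E (1 / 10) := by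
    have := countSingValsGT_add_le N E (s := 1 / 2) (t := 1 / 10) (by norm_num) (by norm_num)
    rwa [add_sub_cancel, show (1 / 2 + 1 / 10 : ℝ) = 3 / 5 by norm_num] at this
  have hNN : countSingValsGT N (1 / 2) ≤ countSingValsGT (N * N) (21 / 100) :=
    (countSingValsGT_le_mul_self_of_isStarNormal (by norm_num)).trans
      (countSingValsGT_antitone _ (by norm_num))
  have hsq : N * N = -(A * E) + (-(E * A) + E * E) := by
    have hNE : N = A - E := (sub_sub_cancel A N).symm
    rw [hNE, ← sub_eq_zero, ← hA]
    noncomm_ring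
  have hAE : countSingValsGT (A * E) (1 / 10) ≤ countSingValsGT E (1 / 10) := by
    simpa [hA1] using countSingValsGT_mul_le A E zero_le_one (by norm_num : (0 : ℝ) ≤ 1 / 10)
  have hEA : countSingValsGT (E * A) (1 / 10) ≤ countSingValsGT E (1 / 10) := by
    simpa [hA1] using countSingValsGT_mul_le E A (by norm_num : (0 : ℝ) ≤ 1 / 10) zero_le_one
  have hEE : countSingValsGT (E * E) (1 / 100) ≤ 2 * countSingValsGT E (1 / 10) := by
    have := countSingValsGT_mul_le E E (s := 1 / 10) (t := 1 / 10) (by norm_num) (by norm_num)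
    rw [show (1 / 10 * (1 / 10) : ℝ) = 1 / 100 by norm_num] at this
    omega
  have hNsq : countSingValsGT (N * N) (21 / 100) ≤ 4 * countSingValsGT E (1 / 10) := by
    have h1 := countSingValsGT_add_le (-(E * A)) (E * E) (s := 1 / 10) (t := 1 / 100)
      (by norm_num) (by norm_num)
    have h2 := countSingValsGT_add_le (-(A * E)) (-(E * A) + E * E) (s := 1 / 10)
      (t := 1 / 10 + 1 / 100) (by norm_num) (by norm_num)
    rw [countSingValsGT_neg] at h1 h2
    rw [← hsq, show (1 / 10 + (1 / 10 + 1 / 100) : ℝ) = 21 / 100 by norm_num] at h2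
    omega
  omega

lemma ZeroDist.tendsto_of_real {E : ∀ n : ℕ, Matrix (Fin n) (Fin n) ℂ} (h : ZeroDist E)
    {f : ℝ → ℝ} (hf : Continuous f) (hfc : HasCompactSupport f) :
    Tendsto (fun n : ℕ => (n : ℝ)⁻¹ * ∑ i, f (singVals (E n) i)) atTop (nhds (f 0)) := by
  have := h ⟨fun x => (f x : ℂ), Complex.continuous_ofReal.comp hf⟩
    (hfc.comp_left Complex.ofReal_zero)
  refine ((Complex.continuous_re.tendsto _).comp this).congr fun n => ?_
  rw [Function.comp_apply, ← Complex.ofReal_natCast, ← Complex.ofReal_inv, Complex.re_ofReal_mul,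
    Complex.re_sum]
  rfl

lemma ZeroDist.eventually_countSingValsGT_le {E : ∀ n : ℕ, Matrix (Fin n) (Fin n) ℂ}
    (h : ZeroDist E) {δ ε : ℝ} (hδ : 0 < δ) (hε : 0 < ε) :
    ∀ᶠ n in atTop, (countSingValsGT (E n) δ : ℝ) ≤ ε * n := by
  set f : ℝ → ℝ := fun x => max 0 (1 - |x| / δ)
  have hf : Continuous f := by fun_prop
  have hfc : HasCompactSupport f := by
    refine HasCompactSupport.intro (isCompact_Icc (a := -δ) (b := δ)) fun x hx => ?_
    rw [Set.mem_Icc, ← abs_le, not_le] at hx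
    exact max_eq_left (by rw [sub_nonpos, one_le_div hδ]; exact hx.le)
  have hf_add_le : ∀ x, f x + (if δ < x then 1 else 0) ≤ 1 := by
    intro x
    split_ifs with hx
    · have : f x = 0 :=
        max_eq_left (by rw [sub_nonpos, one_le_div hδ]; exact hx.le.trans (le_abs_self x))
      rw [this, zero_add]
    · rw [add_zero]
      exact max_le zero_le_one (by linarith [div_nonneg (abs_nonneg x) hδ.le])
  have hlim := h.tendsto_of_real hf hfc
  have hf0 : f 0 = 1 := by simp [f]
  rw [hf0] at hlim
  filter_upwards [hlim.eventually (lt_mem_nhds (by linarith : 1 - ε < 1)),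
    eventually_gt_atTop 0] with n hn hn0
  have hnpos : (0 : ℝ) < n := Nat.cast_pos.mpr hn0
  have hsum : ∑ i, f (singVals (E n) i) + countSingValsGT (E n) δ ≤ n := by
    rw [countSingValsGT, Finset.natCast_card_filter, ← Finset.sum_add_distrib]
    simpa using Finset.sum_le_sum fun i (_ : i ∈ Finset.univ) => hf_add_le (singVals (E n) i)
  rw [inv_mul_eq_div, lt_div_iff₀ hnpos] at hn
  linarith

/-- `[[0, I], [0, 0]]` with blocks of size `n / 2`, padded by a zero last row and column when `n`
is odd. -/
def blockShift (n : ℕ) : Matrix (Fin n) (Fin n) ℂ :=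
  of fun i j => if (i : ℕ) < n / 2 ∧ (j : ℕ) = i + n / 2 then 1 else 0

lemma blockShift_mul_self (n : ℕ) : blockShift n * blockShift n = 0 := by
  ext i k
  simp only [mul_apply, blockShift, of_apply, Matrix.zero_apply]
  refine Finset.sum_eq_zero fun j _ => ?_
  split_ifs <;> first | omega | simp

lemma conjTranspose_blockShift_mul_self (n : ℕ) :
    (blockShift n)ᴴ * blockShift n =
      diagonal fun j : Fin n =>
        ((if n / 2 ≤ (j : ℕ) ∧ (j : ℕ) < 2 * (n / 2) then 1 else 0 : ℝ) : ℂ) := by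
  ext j k
  simp only [mul_apply, diagonal_apply, blockShift, conjTranspose_apply, of_apply]
  by_cases hc : j = k ∧ n / 2 ≤ (j : ℕ) ∧ (j : ℕ) < 2 * (n / 2)
  · obtain ⟨rfl, hj⟩ := hc
    rw [Finset.sum_eq_single ⟨j - n / 2, by omega⟩]
    · have : (j : ℕ) - n / 2 < n / 2 ∧ (j : ℕ) = j - n / 2 + n / 2 := by omega
      rw [if_pos this, if_pos rfl, if_pos hj]
      simp
    · intro i _ hi
      have : ¬ (j : ℕ) = i + n / 2 := fun h => hi (Fin.ext (by simp; omega))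
      simp [this]
    · simp
  · rw [Finset.sum_eq_zero fun i _ => ?_]
    · by_cases hjk : j = k
      · subst hjk
        simp [show ¬(n / 2 ≤ (j : ℕ) ∧ (j : ℕ) < 2 * (n / 2)) from fun h => hc ⟨rfl, h⟩]
      · simp [hjk]
    · split_ifs with h1 h2 <;> try simp
      exact hc ⟨Fin.ext (by omega), by omega, by omega⟩

lemma card_filter_blockShift_support (n : ℕ) :
    (Finset.univ.filter fun j : Fin n => n / 2 ≤ (j : ℕ) ∧ (j : ℕ) < 2 * (n / 2)).card =
      n / 2 := by
  rw [Finset.card_filter,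
    Fin.sum_univ_eq_sum_range (fun j => if n / 2 ≤ j ∧ j < 2 * (n / 2) then 1 else 0),
    ← Finset.card_filter]
  have : (Finset.range n).filter (fun j => n / 2 ≤ j ∧ j < 2 * (n / 2)) =
      Finset.Ico (n / 2) (2 * (n / 2)) := by
    ext j
    simp only [Finset.mem_filter, Finset.mem_range, Finset.mem_Ico]
    omega
  rw [this, Nat.card_Ico]
  omega

lemma sum_singVals_blockShift (n : ℕ) {M : Type*} [AddCommMonoid M] (g : ℝ → M) :
    ∑ i, g (singVals (blockShift n) i) = (n / 2) • g 1 + (n - n / 2) • g 0 := by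
  unfold singVals
  rw [(isHermitian_conjTranspose_mul_self _).sum_comp_eigenvalues_of_eq_diagonal
    (conjTranspose_blockShift_mul_self n) (fun x => g (Real.sqrt x))]
  simp only [apply_ite, Real.sqrt_one, Real.sqrt_zero]
  have hcard := Finset.card_filter_add_card_filter_not (s := Finset.univ)
    (p := fun j : Fin n => n / 2 ≤ (j : ℕ) ∧ (j : ℕ) < 2 * (n / 2))
  rw [card_filter_blockShift_support, Finset.card_univ, Fintype.card_fin] at hcard
  rw [Finset.sum_ite, Finset.sum_const, Finset.sum_const, card_filter_blockShift_support,
    show (Finset.univ.filter fun j : Fin n => ¬(n / 2 ≤ (j : ℕ) ∧ (j : ℕ) < 2 * (n / 2))).card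
      = n - n / 2 by omega]

lemma countSingValsGT_blockShift_of_lt_one (n : ℕ) {t : ℝ} (ht0 : 0 ≤ t) (ht1 : t < 1) :
    countSingValsGT (blockShift n) t = n / 2 := by
  rw [countSingValsGT, Finset.card_filter,
    sum_singVals_blockShift n fun x => if t < x then 1 else 0]
  simp [ht1, not_lt.mpr ht0]

lemma countSingValsGT_blockShift_one (n : ℕ) : countSingValsGT (blockShift n) 1 = 0 := by
  rw [countSingValsGT, Finset.card_filter,
    sum_singVals_blockShift n fun x => if 1 < x then 1 else 0]
  simp

lemma integral_Icc_zero_one_ite_le {E : Type*} [NormedAddCommGroup E] [NormedSpace ℝ E]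
    [CompleteSpace E] {c : ℝ} (hc0 : 0 ≤ c) (hc1 : c ≤ 1) (a b : E) :
    ∫ x in Set.Icc (0 : ℝ) 1, (if x ≤ c then a else b) = c • a + (1 - c) • b := by
  have hIcc : Set.EqOn (fun x : ℝ => if x ≤ c then a else b) (fun _ => a) (Set.Icc 0 c) :=
    fun x hx => if_pos hx.2
  have hIoc : Set.EqOn (fun x : ℝ => if x ≤ c then a else b) (fun _ => b) (Set.Ioc c 1) :=
    fun x hx => if_neg (not_le.mpr hx.1)
  rw [← Set.Icc_union_Ioc_eq_Icc hc0 hc1,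
    setIntegral_union ((Set.Iic_disjoint_Ioc le_rfl).mono_left Set.Icc_subset_Iic_self)
      measurableSet_Ioc
      ((integrableOn_const measure_Icc_lt_top.ne).congr_fun hIcc.symm measurableSet_Icc)
      ((integrableOn_const measure_Ioc_lt_top.ne).congr_fun hIoc.symm measurableSet_Ioc),
    setIntegral_congr_fun measurableSet_Icc hIcc, setIntegral_congr_fun measurableSet_Ioc hIoc,
    setIntegral_const, setIntegral_const, Real.volume_real_Icc_of_le hc0,
    Real.volume_real_Ioc_of_le hc1, sub_zero]

lemma tendsto_natCast_div_two_div :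
    Tendsto (fun n : ℕ => ((n / 2 : ℕ) : ℝ) / n) atTop (nhds (1 / 2)) := by
  refine ((tendsto_nat_floor_mul_div_atTop (a := (1 / 2 : ℝ)) (by norm_num)).comp
    tendsto_natCast_atTop_atTop).congr fun n => ?_
  rw [Function.comp_apply, one_div_mul_eq_div, ← Nat.cast_ofNat, Nat.floor_div_eq_div]

lemma singSymb_blockShift :
    SingSymb (Set.Icc (0 : ℝ) 1) blockShift (fun x => if x ≤ 1 / 2 then (1 : ℂ) else 0) := by
  intro F _
  have hsymb : ((volume (Set.Icc (0 : ℝ) 1)).toReal)⁻¹ •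
      ∫ x in Set.Icc (0 : ℝ) 1, F ‖if x ≤ 1 / 2 then (1 : ℂ) else 0‖ =
        (1 / 2 : ℝ) • F 1 + (1 - 1 / 2 : ℝ) • F 0 := by
    simp only [apply_ite, norm_one, norm_zero, Real.volume_Icc, sub_zero,
      ENNReal.toReal_ofReal zero_le_one, inv_one, one_smul]
    exact integral_Icc_zero_one_ite_le (by norm_num) (by norm_num) _ _
  rw [hsymb]
  have hp := tendsto_natCast_div_two_div
  refine (((hp.smul_const (F 1)).add ((tendsto_const_nhds.sub hp).smul_const (F 0)))).congr' ?_
  filter_upwards [eventually_gt_atTop 0] with n hn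
  have hn' : (n : ℂ) ≠ 0 := Nat.cast_ne_zero.mpr hn.ne'
  rw [sum_singVals_blockShift]
  simp only [Complex.real_smul, nsmul_eq_mul]
  push_cast [Nat.cast_sub (Nat.div_le_self n 2)]
  field_simp

/-- There is a sequence `{A_n}` with `A_n² = 0` and singular value symbol
`χ_{[0,1/2]}` on `[0,1]` that is not acs equivalent to any sequence of normal
matrices. -/
theorem exists_no_normal_acs_equivalent :
    ∃ A : ∀ n : ℕ, Matrix (Fin n) (Fin n) ℂ,
      (∀ n, A n * A n = 0) ∧
      SingSymb (Set.Icc (0:ℝ) 1) A (fun x => if x ≤ 1/2 then (1:ℂ) else 0) ∧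
      ∀ N : ∀ n : ℕ, Matrix (Fin n) (Fin n) ℂ,
        (∀ n, IsStarNormal (N n)) → ¬ ZeroDist (fun n => A n - N n) := by
  refine ⟨blockShift, blockShift_mul_self, singSymb_blockShift, fun N hN hZD => ?_⟩
  obtain ⟨n, hsmall, hn⟩ := ((hZD.eventually_countSingValsGT_le (δ := 1 / 10) (ε := 1 / 20)
    (by norm_num) (by norm_num)).and (eventually_ge_atTop 3)).exists
  have hfar := countSingValsGT_le_of_mul_self_eq_zero (N := N n) (blockShift_mul_self n)
    (countSingValsGT_blockShift_one n)
  rw [countSingValsGT_blockShift_of_lt_one n (by norm_num) (by norm_num)] at hfar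
  have : (n : ℝ) ≤ 10 * countSingValsGT (blockShift n - N n) (1 / 10) + 1 := by
    exact_mod_cast (by omega : n ≤ 10 * countSingValsGT (blockShift n - N n) (1 / 10) + 1)
  have : (3 : ℝ) ≤ n := by exact_mod_cast hn
  linarith
end

section
/- Let $E_n$ be the $n\times n$ matrix with $(E_n)_{i,i+1} = n^{-1}$ for $i<n$, $(E_n)_{n,1} = n^{n-1}$, and zeros elsewhere. Then $\{E_n\}_n$ is zero-distributed ($\sim_\sigma 0$), each $E_n$ is diagonalizable with the same eigenvalues as the cyclic shift $C_n$ (the $n$-th roots of unity), and for the continuous function $f(z) = z + 1 - |z|^2$ the sequence $\{f(E_n)\}_n = \{E_n\}_n$ does not have singular value symbol $f(0) = 1$. -/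
open MeasureTheory Filter Matrix

/-- The basic cyclic shift circulant: ones on the superdiagonal and in position `(n,1)`. -/
def shiftM (n : ℕ) : Matrix (Fin n) (Fin n) ℂ :=
  fun i j => if (i : ℕ) + 1 = (j : ℕ) ∨ ((i : ℕ) = n - 1 ∧ (j : ℕ) = 0) then 1 else 0

/-- `E_n`: `n⁻¹` on the superdiagonal, `n^{n-1}` in position `(n,1)`. -/
noncomputable def Emat (n : ℕ) : Matrix (Fin n) (Fin n) ℂ :=
  fun i j =>
    if (i : ℕ) + 1 = (j : ℕ) then ((n : ℂ))⁻¹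
    else if (i : ℕ) = n - 1 ∧ (j : ℕ) = 0 then (n : ℂ) ^ (n - 1)
    else 0

/-!
Scaling the columns of the cyclic shift gives `E_n = C_n · diag(s_n)` with
`s_n = (n^{n-1}, n⁻¹, …, n⁻¹)`. As `C_n` is a permutation matrix, `E_nᴴ E_n = diag(s_n)²`, so the
singular values of `E_n` are the entries of `s_n`; all but one of them tend to `0`, hence
`n⁻¹ ∑ F(σ_i) → F 0` and `{E_n} ∼_σ 0`. A constant symbol `c` would make these averages tend to
`F ‖c‖` instead, which a bump function with `F 0 = 0`, `F ‖c‖ = 1` excludes unless `c = 0`.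
-/

open Polynomial in
theorem Matrix.IsHermitian.eigenvalues_map_eq_of_eq_diagonal {m 𝕜 : Type*} [Fintype m]
    [DecidableEq m] [RCLike 𝕜] {A : Matrix m m 𝕜} (hA : A.IsHermitian) {d : m → ℝ}
    (h : A = diagonal fun i => (d i : 𝕜)) :
    Finset.univ.val.map hA.eigenvalues = Finset.univ.val.map d := by
  subst h
  have hroots := hA.roots_charpoly_eq_eigenvalues
  rw [charpoly_diagonal, roots_prod _ _ (by simp [Finset.prod_ne_zero_iff, X_sub_C_ne_zero])]
    at hroots
  simp only [roots_X_sub_C, Multiset.bind_singleton] at hroots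
  exact Multiset.map_injective RCLike.ofReal_injective
    (by simpa [Multiset.map_map] using hroots.symm)

theorem sum_singVals_unitary_mul_diagonal {n : ℕ} {M : Type*} [AddCommMonoid M] (G : ℝ → M)
    {U : Matrix (Fin n) (Fin n) ℂ} (hU : Uᴴ * U = 1) {s : Fin n → ℝ} (hs : 0 ≤ s) :
    ∑ i, G (singVals (U * diagonal fun i => (s i : ℂ)) i) = ∑ i, G (s i) := by
  set A := U * diagonal fun i => (s i : ℂ)
  have hAA : Aᴴ * A = diagonal fun i => ((s i ^ 2 : ℝ) : ℂ) := by
    simp only [A, conjTranspose_mul, diagonal_conjTranspose, Matrix.mul_assoc,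
      ← Matrix.mul_assoc Uᴴ, hU, Matrix.one_mul, diagonal_mul_diagonal]
    congr 1; ext i; simp [sq]
  have hmap := (isHermitian_conjTranspose_mul_self A).eigenvalues_map_eq_of_eq_diagonal hAA
  calc ∑ i, G (singVals A i)
      = ((Finset.univ.val.map (isHermitian_conjTranspose_mul_self A).eigenvalues).map
          fun x => G (Real.sqrt x)).sum := by rw [Multiset.map_map]; rfl
    _ = ∑ i, G (Real.sqrt (s i ^ 2)) := by rw [hmap, Multiset.map_map]; rfl
    _ = ∑ i, G (s i) := by simp_rw [Real.sqrt_sq (hs _)]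

theorem tendsto_inv_mul_sum_of_eq_off_zero {F : C(ℝ, ℂ)} (hF : HasCompactSupport F)
    {s : ∀ n : ℕ, Fin n → ℝ} {b : ℕ → ℝ} (hb : Tendsto b atTop (nhds 0))
    (hs : ∀ n (i : Fin n), (i : ℕ) ≠ 0 → s n i = b n) :
    Tendsto (fun n : ℕ => (n : ℂ)⁻¹ * ∑ i, F (s n i)) atTop (nhds (F 0)) := by
  obtain ⟨C, hC⟩ := hF.exists_bound_of_continuous F.continuous
  have hsum (n : ℕ) : ((n + 1 : ℕ) : ℂ)⁻¹ * ∑ i, F (s (n + 1) i)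
      = F (b (n + 1)) + ((n + 1 : ℕ) : ℂ)⁻¹ * (F (s (n + 1) 0) - F (b (n + 1))) := by
    have hdev : ∑ i, (F (s (n + 1) i) - F (b (n + 1))) = F (s (n + 1) 0) - F (b (n + 1)) :=
      Fintype.sum_eq_single 0 fun i hi => by
        rw [hs _ _ (Fin.val_ne_iff.mpr hi), sub_self]
    rw [← hdev, Finset.sum_sub_distrib, Finset.sum_const, Finset.card_univ, Fintype.card_fin,
      nsmul_eq_mul]
    field_simp
    ring
  have hsmall : Tendsto (fun n : ℕ => ((n + 1 : ℕ) : ℂ)⁻¹ * (F (s (n + 1) 0) - F (b (n + 1))))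
      atTop (nhds 0) := by
    refine squeeze_zero_norm (a := fun n : ℕ => ((n + 1 : ℕ) : ℝ)⁻¹ * (C + C)) (fun n => ?_) ?_
    · rw [norm_mul, norm_inv, Complex.norm_natCast]
      gcongr
      exact (norm_sub_le _ _).trans (add_le_add (hC _) (hC _))
    · simpa using (tendsto_inv_atTop_zero.comp
        (tendsto_natCast_atTop_atTop.comp (tendsto_add_atTop_nat 1))).mul_const (C + C)
  rw [← tendsto_add_atTop_iff_nat 1]
  simp_rw [hsum]
  simpa using ((F.continuous.tendsto 0).comp (hb.comp (tendsto_add_atTop_nat 1))).add hsmall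

theorem ZeroDist.eq_zero_of_singSymb_const {α : Type*} [MeasureSpace α] {D : Set α}
    (hD₀ : volume D ≠ 0) (hD : volume D ≠ ⊤) {A : ∀ n : ℕ, Matrix (Fin n) (Fin n) ℂ} {c : ℂ}
    (hA : ZeroDist A) (hc : SingSymb D A fun _ => c) : c = 0 := by
  by_contra hc0
  have hr : 0 < ‖c‖ := norm_pos_iff.mpr hc0
  let φ : ContDiffBump ‖c‖ := ⟨‖c‖ / 2, ‖c‖, half_pos hr, half_lt_self hr⟩
  let F : C(ℝ, ℂ) := ⟨fun x => (φ x : ℂ), Complex.continuous_ofReal.comp φ.continuous⟩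
  have hF : HasCompactSupport F := φ.hasCompactSupport.comp_left Complex.ofReal_zero
  have hF0 : F 0 = 0 := by
    simp [F, φ.zero_of_le_dist (x := 0) (by simp [Real.dist_eq, φ])]
  have hFc : F ‖c‖ = 1 := by
    simp [F, φ.one_of_mem_closedBall (Metric.mem_closedBall_self φ.rIn_pos.le)]
  have hlim := hc F hF
  rw [setIntegral_const, smul_smul, measureReal_def,
    inv_mul_cancel₀ (ENNReal.toReal_ne_zero.mpr ⟨hD₀, hD⟩), one_smul] at hlim
  simpa [hF0, hFc] using tendsto_nhds_unique (hA F hF) hlim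

theorem inv_diagonal_of_ne_zero {m K : Type*} [Fintype m] [DecidableEq m] [Field K] {d : m → K}
    (hd : ∀ i, d i ≠ 0) : (diagonal d)⁻¹ = diagonal d⁻¹ :=
  inv_eq_right_inv <| by
    rw [diagonal_mul_diagonal, ← diagonal_one]
    exact congrArg diagonal (funext fun i => mul_inv_cancel₀ (hd i))

theorem shiftM_eq_permMatrix (n : ℕ) : shiftM n = (finRotate n).permMatrix ℂ := by
  ext i j
  cases n with
  | zero => exact i.elim0
  | succ m =>
    simp only [shiftM, PEquiv.toMatrix_apply, Equiv.toPEquiv_apply, Option.mem_def,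
      Option.some.injEq, Fin.ext_iff, coe_finRotate, Fin.val_last]
    have := i.isLt
    have := j.isLt
    split_ifs <;> first | rfl | omega

theorem conjTranspose_shiftM_mul_self (n : ℕ) : (shiftM n)ᴴ * shiftM n = 1 := by
  rw [shiftM_eq_permMatrix, conjTranspose_permMatrix, ← permMatrix_mul, mul_inv_cancel,
    permMatrix_one]

noncomputable def ematSingVal (n : ℕ) (j : Fin n) : ℝ :=
  if (j : ℕ) = 0 then (n : ℝ) ^ (n - 1) else (n : ℝ)⁻¹

theorem ematSingVal_nonneg (n : ℕ) : 0 ≤ ematSingVal n := fun j => by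
  unfold ematSingVal; split_ifs <;> positivity

theorem Emat_eq_shiftM_mul_diagonal (n : ℕ) :
    Emat n = shiftM n * diagonal fun j => (ematSingVal n j : ℂ) := by
  ext i j
  rw [mul_diagonal]
  simp only [Emat, shiftM, ematSingVal]
  split_ifs <;> first | omega | simp

theorem Emat_zeroDist : ZeroDist Emat := fun F hF => by
  simp_rw [Emat_eq_shiftM_mul_diagonal, sum_singVals_unitary_mul_diagonal _
    (conjTranspose_shiftM_mul_self _) (ematSingVal_nonneg _)]
  exact tendsto_inv_mul_sum_of_eq_off_zero hF tendsto_inv_atTop_nhds_zero_nat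
    fun n i hi => if_neg hi

theorem natCast_pow_val_ne_zero {n : ℕ} (i : Fin n) : (n : ℂ) ^ (i : ℕ) ≠ 0 :=
  pow_ne_zero _ (Nat.cast_ne_zero.mpr (Fin.pos i).ne')

theorem Emat_eq_diagonal_conj (n : ℕ) : Emat n =
    diagonal (fun i : Fin n => (n : ℂ) ^ (i : ℕ)) * shiftM n *
      (diagonal fun i : Fin n => (n : ℂ) ^ (i : ℕ))⁻¹ := by
  rw [inv_diagonal_of_ne_zero natCast_pow_val_ne_zero]
  ext i j
  rw [mul_diagonal, diagonal_mul]
  simp only [Emat, shiftM, Pi.inv_apply]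
  split_ifs with h₁ <;> first | omega | skip
  · rw [← h₁, pow_succ, mul_one, mul_inv, ← mul_assoc,
      mul_inv_cancel₀ (natCast_pow_val_ne_zero i), one_mul]
  · simp_all
  · simp

theorem Emat_charpoly (n : ℕ) : (Emat n).charpoly = (shiftM n).charpoly := by
  have hD : IsUnit (diagonal fun i : Fin n => (n : ℂ) ^ (i : ℕ)) :=
    isUnit_diagonal.mpr (Pi.isUnit_iff.mpr fun i => (natCast_pow_val_ne_zero i).isUnit)
  rw [Emat_eq_diagonal_conj]
  exact charpoly_units_conj hD.unit _

/-- `{E_n}` is zero-distributed, each `E_n = S_n C_n S_n⁻¹` (with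
`S_n = diag(1, n, …, n^{n-1})`) is diagonalizable with the same eigenvalues as
the cyclic shift `C_n` (the `n`-th roots of unity), `f(z) = z + 1 - |z|²`
fixes every unit-modulus eigenvalue (so `f(E_n) = E_n`), yet `{E_n} = {f(E_n)}`
does not have the constant `f(0) = 1` as a singular value symbol. -/
theorem Emat_counterexample :
    ZeroDist Emat ∧
    (∀ n : ℕ, Emat n =
        Matrix.diagonal (fun i : Fin n => (n : ℂ) ^ (i : ℕ)) * shiftM n *
          (Matrix.diagonal (fun i : Fin n => (n : ℂ) ^ (i : ℕ)))⁻¹) ∧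
    (∀ n : ℕ, (Emat n).charpoly = (shiftM n).charpoly) ∧
    (∀ z : ℂ, ‖z‖ = 1 → z + 1 - ((‖z‖ : ℂ)) ^ 2 = z) ∧
    ¬ SingSymb (Set.Icc (0:ℝ) 1) Emat (fun _ => (1:ℂ)) := by
  refine ⟨Emat_zeroDist, Emat_eq_diagonal_conj, Emat_charpoly, fun z hz => ?_, fun hσ => ?_⟩
  · rw [hz]
    norm_num
  · exact one_ne_zero <| Emat_zeroDist.eq_zero_of_singSymb_const
      (by simp [Real.volume_Icc]) (by simp [Real.volume_Icc]) hσ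
end

section
/- Let $\{\Sigma_n\}_n$ and $\{\Sigma'_n\}_n$ be sequences of diagonal matrices with nonnegative real entries such that both have singular value symbol $|k|$ for the same measurable $k$. If both also have the same spectral symbol $f$ (a nonnegative monotone rearrangement of $|k|$ on $[0,1]$), and there exist permutation matrices $P_n, P'_n$ with $\{P_n\Sigma_nP_n^T\}_n$ and $\{P'_n\Sigma'_n(P'_n)^T\}_n$ both acs equivalent (with the same symbol), then for any sequence $\{A_n\}_n\sim_\sigma k$ with SVD $A_n = Q'_n\Sigma'_nW'_n$ and any $\{B_n\}_n$ with SVD $B_n = Q_n\Sigma_nW_n$ satisfying $\{B_n\}_n\sim_\sigma k$, there exist unitary sequences $\{U_n\}_n, \{V_n\}_n$ such that $\{B_n - U_nA_nV_n\}_n$ is zero-distributed. -/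
open MeasureTheory Filter Matrix

/-- The permutation matrix of `p : Equiv.Perm (Fin n)`. -/
def permMat {n : ℕ} (p : Equiv.Perm (Fin n)) : Matrix (Fin n) (Fin n) ℂ :=
  fun i j => if p j = i then 1 else 0

/-!
With `P = permMat p` and `P' = permMat p'` we take `U = Q Pᴴ P' Q'ᴴ` and `V = W'ᴴ P'ᴴ P W`.
Then `B - U A V = (Q Pᴴ) (P Σ Pᴴ - P' Σ' P'ᴴ) (P W)`, a two-sided unitary transform of the
zero-distributed difference in the hypothesis; unitary factors do not change singular values,
so `B - U A V` is zero-distributed as well.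
-/

theorem sub_twoSided_transform_eq_of_mem_unitary {R : Type*} [Ring R] [StarMul R] {p q' w' : R}
    (hp : p ∈ unitary R) (hq' : q' ∈ unitary R) (hw' : w' ∈ unitary R) (q s w p' s' : R) :
    q * s * w - (q * star p * p' * star q') * (q' * s' * w') * (star w' * star p' * p * w) =
      (q * star p) * (p * s * star p - p' * s' * star p') * (p * w) := by
  have hpp : star p * p = 1 := Unitary.star_mul_self_of_mem hp
  have hq'q' : star q' * q' = 1 := Unitary.star_mul_self_of_mem hq'
  have hw'w' : w' * star w' = 1 := Unitary.mul_star_self_of_mem hw'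
  simp only [mul_sub, sub_mul, mul_assoc]
  rw [← mul_assoc (star p) p, hpp, one_mul, ← mul_assoc (star p) p, hpp, one_mul,
    ← mul_assoc (star q') q', hq'q', one_mul, ← mul_assoc w' (star w'), hw'w', one_mul]

namespace Equiv.Perm

theorem permMatrix_mem_unitaryGroup {n R : Type*} [Fintype n] [DecidableEq n] [CommRing R]
    [StarRing R] (σ : Perm n) : σ.permMatrix R ∈ unitaryGroup n R := by
  rw [mem_unitaryGroup_iff', star_eq_conjTranspose, conjTranspose_permMatrix,
    ← permMatrix_mul, mul_inv_cancel, permMatrix_one]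

end Equiv.Perm

section PermMat

variable {n : ℕ}

theorem permMat_eq_permMatrix (p : Equiv.Perm (Fin n)) : permMat p = p⁻¹.permMatrix ℂ := by
  ext i j
  simp only [permMat, PEquiv.toMatrix_apply, Equiv.toPEquiv_apply, Option.mem_def,
    Option.some.injEq, Equiv.Perm.inv_def, Equiv.symm_apply_eq, @eq_comm _ i]

theorem permMat_mem_unitaryGroup (p : Equiv.Perm (Fin n)) :
    permMat p ∈ unitaryGroup (Fin n) ℂ := by
  rw [permMat_eq_permMatrix]
  exact p⁻¹.permMatrix_mem_unitaryGroup

theorem transpose_permMat (p : Equiv.Perm (Fin n)) : (permMat p)ᵀ = star (permMat p) := by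
  rw [permMat_eq_permMatrix, star_eq_conjTranspose, transpose_permMatrix,
    conjTranspose_permMatrix]

end PermMat

section SingVals

variable {n : ℕ} {A B U V : Matrix (Fin n) (Fin n) ℂ}

theorem singVals_eq_of_charpoly_eq (h : (Aᴴ * A).charpoly = (Bᴴ * B).charpoly) :
    singVals A = singVals B := by
  have := ((isHermitian_conjTranspose_mul_self A).eigenvalues_eq_eigenvalues_iff
    (isHermitian_conjTranspose_mul_self B)).2 h
  unfold singVals
  rw [this]

theorem singVals_unitary_mul (hU : U ∈ unitaryGroup (Fin n) ℂ) : singVals (U * A) = singVals A := by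
  refine singVals_eq_of_charpoly_eq (congrArg charpoly ?_)
  have hUU : Uᴴ * U = 1 := Unitary.star_mul_self_of_mem hU
  rw [conjTranspose_mul, Matrix.mul_assoc, ← Matrix.mul_assoc Uᴴ, hUU, Matrix.one_mul]

theorem singVals_mul_unitary (hV : V ∈ unitaryGroup (Fin n) ℂ) : singVals (A * V) = singVals A := by
  refine singVals_eq_of_charpoly_eq ?_
  have hVV : V * Vᴴ = 1 := Unitary.mul_star_self_of_mem hV
  rw [conjTranspose_mul, Matrix.mul_assoc, charpoly_mul_comm, Matrix.mul_assoc,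
    Matrix.mul_assoc, hVV, Matrix.mul_one]

end SingVals

theorem ZeroDist.unitary_mul_mul {X U V : ∀ n : ℕ, Matrix (Fin n) (Fin n) ℂ} (hX : ZeroDist X)
    (hU : ∀ n, U n ∈ unitaryGroup (Fin n) ℂ) (hV : ∀ n, V n ∈ unitaryGroup (Fin n) ℂ) :
    ZeroDist (fun n => U n * X n * V n) := by
  intro F hF
  have hsing (n : ℕ) : singVals (U n * X n * V n) = singVals (X n) := by
    rw [singVals_mul_unitary (hV n), singVals_unitary_mul (hU n)]
  simpa only [hsing] using hX F hF

theorem svd_two_sided_unitary_matching_general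
    (σd σd' : ∀ n : ℕ, Fin n → ℝ)
    (p p' : ∀ n : ℕ, Equiv.Perm (Fin n))
    (hperm : ZeroDist (fun n =>
        permMat (p n) * Matrix.diagonal (fun i => (σd n i : ℂ)) * (permMat (p n))ᵀ -
        permMat (p' n) * Matrix.diagonal (fun i => (σd' n i : ℂ)) * (permMat (p' n))ᵀ))
    (A B Q W Q' W' : ∀ n : ℕ, Matrix (Fin n) (Fin n) ℂ)
    (hQ : ∀ n, Q n ∈ Matrix.unitaryGroup (Fin n) ℂ)
    (hW : ∀ n, W n ∈ Matrix.unitaryGroup (Fin n) ℂ)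
    (hQ' : ∀ n, Q' n ∈ Matrix.unitaryGroup (Fin n) ℂ)
    (hW' : ∀ n, W' n ∈ Matrix.unitaryGroup (Fin n) ℂ)
    (hBsvd : ∀ n, B n = Q n * Matrix.diagonal (fun i => (σd n i : ℂ)) * W n)
    (hAsvd : ∀ n, A n = Q' n * Matrix.diagonal (fun i => (σd' n i : ℂ)) * W' n) :
    ∃ U V : ∀ n : ℕ, Matrix (Fin n) (Fin n) ℂ,
      (∀ n, U n ∈ Matrix.unitaryGroup (Fin n) ℂ) ∧
      (∀ n, V n ∈ Matrix.unitaryGroup (Fin n) ℂ) ∧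
      ZeroDist (fun n => B n - U n * A n * V n) := by
  have hP := fun n => permMat_mem_unitaryGroup (p n)
  have hP' := fun n => permMat_mem_unitaryGroup (p' n)
  refine ⟨fun n => Q n * star (permMat (p n)) * permMat (p' n) * star (Q' n),
    fun n => star (W' n) * star (permMat (p' n)) * permMat (p n) * W n,
    fun n => mul_mem (mul_mem (mul_mem (hQ n) (Unitary.star_mem (hP n))) (hP' n))
      (Unitary.star_mem (hQ' n)),
    fun n => mul_mem (mul_mem (mul_mem (Unitary.star_mem (hW' n)) (Unitary.star_mem (hP' n)))
      (hP n)) (hW n), ?_⟩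
  simp only [transpose_permMat] at hperm
  have hconj := hperm.unitary_mul_mul (fun n => mul_mem (hQ n) (Unitary.star_mem (hP n)))
    (fun n => mul_mem (hP n) (hW n))
  simpa only [hAsvd, hBsvd, sub_twoSided_transform_eq_of_mem_unitary (hP _) (hQ' _) (hW' _)] using hconj

/-- Core computation of the cyclic-group embedding: if the SVD factors `Σ_n`,
`Σ'_n` of `B_n` and `A_n` (both `∼_σ k`, with common spectral symbol `f`, a
nonnegative monotone rearrangement of `|k|` on `[0,1]`) can be matched by
permutations up to a zero-distributed error, then there are unitary sequences
`{U_n}`, `{V_n}` with `{B_n - U_n A_n V_n}` zero-distributed. -/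
theorem svd_two_sided_unitary_matching {q : ℕ}
    (Dset : Set (EuclideanSpace ℝ (Fin q))) (hD0 : 0 < volume Dset) (hD1 : volume Dset < ⊤)
    (k : EuclideanSpace ℝ (Fin q) → ℂ)
    (σd σd' : ∀ n : ℕ, Fin n → ℝ)
    (hσ : ∀ n i, 0 ≤ σd n i) (hσ' : ∀ n i, 0 ≤ σd' n i)
    (hSig1 : SingSymb Dset (fun n => Matrix.diagonal (fun i => (σd n i : ℂ))) k)
    (hSig2 : SingSymb Dset (fun n => Matrix.diagonal (fun i => (σd' n i : ℂ))) k)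
    (f : ℝ → ℝ) (hf0 : ∀ x, 0 ≤ f x) (hfmono : MonotoneOn f (Set.Icc 0 1))
    (hfSig1 : SpecSymb (Set.Icc (0:ℝ) 1)
      (fun n => Matrix.diagonal (fun i => (σd n i : ℂ))) (fun x => (f x : ℂ)))
    (hfSig2 : SpecSymb (Set.Icc (0:ℝ) 1)
      (fun n => Matrix.diagonal (fun i => (σd' n i : ℂ))) (fun x => (f x : ℂ)))
    (p p' : ∀ n : ℕ, Equiv.Perm (Fin n))
    (hperm : ZeroDist (fun n =>
        permMat (p n) * Matrix.diagonal (fun i => (σd n i : ℂ)) * (permMat (p n))ᵀ -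
        permMat (p' n) * Matrix.diagonal (fun i => (σd' n i : ℂ)) * (permMat (p' n))ᵀ))
    (A B Q W Q' W' : ∀ n : ℕ, Matrix (Fin n) (Fin n) ℂ)
    (hQ : ∀ n, Q n ∈ Matrix.unitaryGroup (Fin n) ℂ)
    (hW : ∀ n, W n ∈ Matrix.unitaryGroup (Fin n) ℂ)
    (hQ' : ∀ n, Q' n ∈ Matrix.unitaryGroup (Fin n) ℂ)
    (hW' : ∀ n, W' n ∈ Matrix.unitaryGroup (Fin n) ℂ)
    (hBsvd : ∀ n, B n = Q n * Matrix.diagonal (fun i => (σd n i : ℂ)) * W n)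
    (hAsvd : ∀ n, A n = Q' n * Matrix.diagonal (fun i => (σd' n i : ℂ)) * W' n)
    (hAk : SingSymb Dset A k) (hBk : SingSymb Dset B k) :
    ∃ U V : ∀ n : ℕ, Matrix (Fin n) (Fin n) ℂ,
      (∀ n, U n ∈ Matrix.unitaryGroup (Fin n) ℂ) ∧
      (∀ n, V n ∈ Matrix.unitaryGroup (Fin n) ℂ) ∧
      ZeroDist (fun n => B n - U n * A n * V n) :=
  svd_two_sided_unitary_matching_general σd σd' p p' hperm A B Q W Q' W' hQ hW hQ' hW' hBsvd hAsvd
end
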